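/- arXiv:0907.2865 — 8 statements merged into one kernel-verified Lean document; each statement's English description precedes it below -/
import Mathlib

section
/- Let k ≥ 1 and n ≥ 1, and let a_0, a_1 be elements of a commutative ring with unity. Then per((a_0·I_n + a_1·P_n) ⊗ J_k) = (k!)^n · Σ_{l=0}^{k} C(k,l)^n · (a_0^{k−l} a_1^{l})^n. -/
open scoped BigOperators
open Kronecker

/-- The permanent of a rectangular matrix: the sum over all injections of the
row index set into the column index set of the corresponding products. -/
noncomputable def rectPer {R : Type*} [CommRing R] {ι κ : Type*} [Fintype ι] [Fintype κ]
    [DecidableEq ι] [DecidableEq κ] (A : Matrix ι κ R) : R :=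
  ∑ σ : ι ↪ κ, ∏ i, A i (σ i)

/-- The `n × n` circulant `(0,1)` matrix `P_n`, with `(i,j)` entry `1` iff `j − i ≡ 1 (mod n)`. -/
def Pcirc (R : Type*) [CommRing R] (n : ℕ) [NeZero n] : Matrix (Fin n) (Fin n) R :=
  Matrix.of fun i j => if j = i + 1 then 1 else 0

/-!
Row `(i, s)` of `(a₀ I + a₁ P) ⊗ J` carries `a₀` on column block `i` and `a₁` on block
`i + 1`. Expanding the product in each term of the permanent, every row chooses one of the two terms
(`c r = true` for `a₁`), and the injections compatible with these block choices are counted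
fibrewise: a column block receiving `m` rows admits `k (k-1) ⋯ (k-m+1)` of them. As the `nk` rows
fill `n` blocks of `k` columns, the count vanishes unless every block receives exactly `k` rows.
Block `j` receives the `a₀`-rows of block row `j` and the `a₁`-rows of block row `j - 1`, so
this says that every block row has the same number `l` of `a₁`-rows; there are `C(k, l)ⁿ` such
choices, each contributing `(k!)ⁿ (a₀^(k-l) a₁^l)ⁿ`.
-/

open Finset

def embeddingProdFstEquiv {ρ ι κ : Type*} (g : ρ → ι) :
    {σ : ρ ↪ ι × κ // ∀ r, (σ r).1 = g r} ≃ ∀ j, {r // g r = j} ↪ κ where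
  toFun σ j := ⟨fun r => (σ.1 r).2, fun r r' h => Subtype.ext <| σ.1.injective <|
    Prod.ext (by rw [σ.2, σ.2, r.2, r'.2]) h⟩
  invFun h := ⟨((Equiv.sigmaFiberEquiv g).symm.toEmbedding.trans
      (Function.Embedding.sigmaMap (.refl ι) h)).trans (Equiv.sigmaEquivProd ι κ).toEmbedding,
    fun _ => rfl⟩
  left_inv σ := Subtype.ext <| Function.Embedding.ext fun r => Prod.ext (σ.2 r).symm rfl
  right_inv h := by
    funext j
    ext ⟨r, rfl⟩
    rfl

theorem card_embedding_prod_fst_eq {ρ ι κ : Type*} [Fintype ρ] [Fintype ι] [Fintype κ]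
    [DecidableEq ρ] [DecidableEq ι] (g : ρ → ι) :
    Fintype.card {σ : ρ ↪ ι × κ // ∀ r, (σ r).1 = g r} =
      ∏ j, (Fintype.card κ).descFactorial (Fintype.card {r // g r = j}) := by
  simp only [Fintype.card_congr (embeddingProdFstEquiv g), Fintype.card_pi,
    Fintype.card_embedding_eq]

theorem rectPer_kronecker_ones {R : Type*} [CommRing R] {ι ι' κ κ' : Type*} [Fintype ι]
    [Fintype ι'] [Fintype κ] [Fintype κ'] [DecidableEq ι] [DecidableEq ι'] [DecidableEq κ]
    [DecidableEq κ'] (A : Matrix ι ι' R) :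
    rectPer (A ⊗ₖ Matrix.of fun (_ : κ) (_ : κ') => (1 : R)) =
      ∑ g : ι × κ → ι', (∏ r, A r.1 (g r)) *
        ∏ j, ((Fintype.card κ').descFactorial (Fintype.card {r // g r = j}) : R) := by
  rw [rectPer, ← sum_fiberwise _ (fun σ : ι × κ ↪ ι' × κ' => fun r => (σ r).1)]
  refine sum_congr rfl fun g _ => ?_
  have hσ : ∀ σ ∈ ({σ | (fun r => (σ r).1) = g} : Finset (ι × κ ↪ ι' × κ')),
      ∏ r, (A ⊗ₖ Matrix.of fun (_ : κ) (_ : κ') => (1 : R)) r (σ r) =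
        ∏ r, A r.1 (g r) := by
    intro σ hσ
    simp [← (mem_filter.1 hσ).2, Matrix.kroneckerMap_apply]
  rw [sum_congr rfl hσ, sum_const, nsmul_eq_mul, mul_comm, ← Nat.cast_prod,
    ← card_embedding_prod_fst_eq, Fintype.card_subtype]
  simp only [funext_iff]

theorem sum_prod_sum_mul_ite_eq {R β ρ ι : Type*} [CommSemiring R] [Fintype β] [Fintype ρ]
    [DecidableEq ρ] [Fintype ι] [DecidableEq ι] (w : ρ → β → R) (t : ρ → β → ι)
    (F : (ρ → ι) → R) :
    ∑ g : ρ → ι, (∏ r, ∑ b, w r b * if g r = t r b then 1 else 0) * F g =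
      ∑ c : ρ → β, (∏ r, w r (c r)) * F fun r => t r (c r) := by
  simp_rw [Fintype.prod_sum, prod_mul_distrib, prod_boole, sum_mul]
  rw [sum_comm]
  refine sum_congr rfl fun c _ => ?_
  simp [← funext_iff]

theorem prod_descFactorial_card_fiber {ρ ι : Type*} [Fintype ρ] [Fintype ι] [DecidableEq ι]
    (k : ℕ) (g : ρ → ι) (hρ : Fintype.card ρ = Fintype.card ι * k) :
    ∏ j, k.descFactorial (Fintype.card {r // g r = j}) =
      if ∀ j, Fintype.card {r // g r = j} = k then k.factorial ^ Fintype.card ι else 0 := by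
  split_ifs with h
  · simp [h, Nat.descFactorial_self]
  obtain ⟨j, hj⟩ := not_forall.1 h
  refine prod_eq_zero_iff.2 (not_forall_not.1 fun hne => ?_)
  have hle : ∀ j', Fintype.card {r // g r = j'} ≤ k := fun j' => by
    simpa [Nat.descFactorial_eq_zero_iff_lt] using hne j'
  have hsum : ∑ j', Fintype.card {r // g r = j'} = Fintype.card ρ := by
    rw [← Fintype.card_sigma, Fintype.card_congr (Equiv.sigmaFiberEquiv g)]
  have : ∑ j', Fintype.card {r // g r = j'} < ∑ _j' : ι, k :=
    sum_lt_sum (fun j' _ => hle j') ⟨j, mem_univ j, lt_of_le_of_ne (hle j) hj⟩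
  simp [hsum, hρ, mul_comm] at this

open Fin.NatCast in
theorem Fin.apply_eq_apply_zero_of_forall_add_one {n : ℕ} [NeZero n] {α : Type*}
    (f : Fin n → α) (h : ∀ j, f (j + 1) = f j) (j : Fin n) : f j = f 0 := by
  have key : ∀ i : ℕ, f i = f 0 := fun i => by
    induction i with
    | zero => simp
    | succ i ih => rw [Nat.cast_succ, h, ih]
  simpa using key j

theorem ite_forall_eq_prod_eq_sum_prod_ite {R ι : Type*} [CommSemiring R] [Fintype ι]
    (φ : ℕ → R) {N : ℕ} (m : ι → ℕ) (hm : ∀ i, m i ≤ N) (i₀ : ι) :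
    (if ∀ i, m i = m i₀ then ∏ i, φ (m i) else 0) =
      ∑ l ∈ range (N + 1), ∏ i, if m i = l then φ l else 0 := by
  by_cases h : ∀ i, m i = m i₀
  · rw [if_pos h, sum_eq_single_of_mem (m i₀) (mem_range.2 (Nat.lt_succ_of_le (hm i₀)))]
    · exact prod_congr rfl fun i _ => by rw [if_pos (h i), h i]
    · exact fun l _ hl => prod_eq_zero (mem_univ i₀) (if_neg (Ne.symm hl))
  · obtain ⟨i, hi⟩ := not_forall.1 h
    refine (if_neg h).trans (sum_eq_zero fun l _ => ?_).symm
    by_cases hl : m i₀ = l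
    · exact prod_eq_zero (mem_univ i) (if_neg (hl ▸ hi))
    · exact prod_eq_zero (mem_univ i₀) (if_neg hl)

theorem sum_bool_fun_ite_card_eq {R κ : Type*} [CommSemiring R] [Fintype κ] [DecidableEq κ]
    (l : ℕ) (x : R) :
    ∑ e : κ → Bool, (if #{s | e s = true} = l then x else 0) =
      (Fintype.card κ).choose l * x := by
  have hbij : Function.Bijective fun e : κ → Bool => ({s | e s = true} : Finset κ) := by
    refine Function.bijective_iff_has_inverse.2 ⟨fun T s => decide (s ∈ T), ?_, ?_⟩ <;>
      intro _ <;> ext <;> simp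
  rw [Fintype.sum_bijective _ hbij _ (fun T => if #T = l then x else 0) fun _ => rfl,
    ← powerset_univ, sum_powerset_apply_card (fun m => if m = l then x else 0)]
  simp only [smul_ite, nsmul_eq_mul, smul_zero, sum_ite_eq', mem_range, card_univ]
  split_ifs with h
  · rfl
  · simp [Nat.choose_eq_zero_of_lt (by omega : Fintype.card κ < l)]

section RowCount

variable {ι κ : Type*} [Fintype κ]

def rowCount (c : ι × κ → Bool) (i : ι) : ℕ :=
  #{s | c (i, s) = true}

theorem rowCount_le (c : ι × κ → Bool) (i : ι) : rowCount c i ≤ Fintype.card κ :=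
  (card_filter_le _ _).trans card_univ.le

theorem card_filter_not_eq_sub_rowCount (c : ι × κ → Bool) (i : ι) :
    #{s | ¬c (i, s) = true} = Fintype.card κ - rowCount c i := by
  have hsum := card_filter_add_card_filter_not (s := univ) fun s => c (i, s) = true
  rw [card_univ] at hsum
  rw [rowCount]
  omega

theorem prod_ite_eq_prod_pow_rowCount {M : Type*} [CommMonoid M] [Fintype ι]
    (c : ι × κ → Bool) (x y : M) :
    ∏ r, (if c r then x else y) =
      ∏ i, y ^ (Fintype.card κ - rowCount c i) * x ^ rowCount c i := by
  rw [Fintype.prod_prod_type]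
  refine prod_congr rfl fun i _ => ?_
  rw [prod_ite, prod_const, prod_const, mul_comm, card_filter_not_eq_sub_rowCount, rowCount]

theorem sum_ite_rowCount_const {R : Type*} [CommSemiring R] [Fintype ι] [DecidableEq ι]
    [DecidableEq κ] (φ : ℕ → R) (i₀ : ι) :
    ∑ c : ι × κ → Bool,
        (if ∀ i, rowCount c i = rowCount c i₀ then ∏ i, φ (rowCount c i) else 0) =
      ∑ l ∈ range (Fintype.card κ + 1),
        ((Fintype.card κ).choose l * φ l) ^ Fintype.card ι := by
  calc _ = ∑ c : ι × κ → Bool, ∑ l ∈ range (Fintype.card κ + 1),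
        ∏ i, if rowCount c i = l then φ l else 0 :=
        sum_congr rfl fun c _ => ite_forall_eq_prod_eq_sum_prod_ite φ _ (rowCount_le c) i₀
    _ = ∑ l ∈ range (Fintype.card κ + 1), ∑ d : ι → κ → Bool,
        ∏ i, if #{s | d i s = true} = l then φ l else 0 := by
      rw [sum_comm]
      exact sum_congr rfl fun l _ => Fintype.sum_equiv (Equiv.curry ι κ Bool) _ _ fun _ => rfl
    _ = _ := by
      refine sum_congr rfl fun l _ => ?_
      rw [← Fintype.prod_sum fun (_ : ι) (e : κ → Bool) =>
          if #{s | e s = true} = l then φ l else 0,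
        prod_const, card_univ, sum_bool_fun_ite_card_eq]

end RowCount

section Circulant

variable {n k : ℕ} [NeZero n]

def targetBlock (c : Fin n × Fin k → Bool) (r : Fin n × Fin k) : Fin n :=
  if c r then r.1 + 1 else r.1

theorem smul_one_add_smul_Pcirc_apply {R : Type*} [CommRing R] (a0 a1 : R) (i j : Fin n) :
    (a0 • (1 : Matrix (Fin n) (Fin n) R) + a1 • Pcirc R n) i j =
      ∑ b : Bool, (if b then a1 else a0) * if j = (if b then i + 1 else i) then 1 else 0 := by
  simp [Pcirc, Matrix.one_apply, eq_comm, add_comm]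

theorem card_targetBlock_fiber (c : Fin n × Fin k → Bool) (j : Fin n) :
    Fintype.card {r // targetBlock c r = j} = k - rowCount c j + rowCount c (j - 1) := by
  have hrow : ∀ i, #{s | targetBlock c (i, s) = j} =
      (if i = j then k - rowCount c i else 0) + if i = j - 1 then rowCount c i else 0 := by
    intro i
    have hterm : ∀ s, (if targetBlock c (i, s) = j then 1 else 0) =
        if c (i, s) = true then (if i = j - 1 then 1 else 0) else if i = j then 1 else 0 := by
      intro s
      by_cases h : c (i, s) = true <;> simp [targetBlock, h, eq_sub_iff_add_eq]
    rw [card_filter, sum_congr rfl fun s _ => hterm s, sum_ite, sum_const, sum_const,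
      card_filter_not_eq_sub_rowCount, Fintype.card_fin, ← rowCount]
    split_ifs <;> simp [add_comm]
  rw [Fintype.card_subtype, card_filter, Fintype.sum_prod_type]
  simp_rw [← card_filter, hrow]
  rw [sum_add_distrib, sum_ite_eq', sum_ite_eq']
  simp

theorem forall_card_targetBlock_fiber_eq_iff (c : Fin n × Fin k → Bool) :
    (∀ j, Fintype.card {r // targetBlock c r = j} = k) ↔
      ∀ j, rowCount c j = rowCount c 0 := by
  have hle := rowCount_le c
  simp only [Fintype.card_fin] at hle
  simp_rw [card_targetBlock_fiber]
  constructor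
  · refine fun h => Fin.apply_eq_apply_zero_of_forall_add_one _ fun j => ?_
    have := h (j + 1)
    rw [add_sub_cancel_right] at this
    have := hle j; have := hle (j + 1)
    omega
  · intro h j
    rw [h j, h (j - 1)]
    have := hle 0
    omega

theorem prod_ite_mul_prod_descFactorial_card_targetBlock_fiber {R : Type*} [CommRing R]
    (c : Fin n × Fin k → Bool) (a0 a1 : R) :
    (∏ r, if c r then a1 else a0) *
        ∏ j, ((k.descFactorial (Fintype.card {r // targetBlock c r = j}) : ℕ) : R) =
      if ∀ i, rowCount c i = rowCount c 0 then
        ∏ i, a0 ^ (k - rowCount c i) * a1 ^ rowCount c i * k.factorial else 0 := by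
  rw [← Nat.cast_prod, prod_descFactorial_card_fiber k _ (by simp),
    prod_ite_eq_prod_pow_rowCount]
  simp only [forall_card_targetBlock_fiber_eq_iff]
  split_ifs <;> simp [prod_mul_distrib]

end Circulant

theorem stmt0_general {R : Type*} [CommRing R] (n k : ℕ) [NeZero n] (a0 a1 : R) :
    rectPer ((a0 • (1 : Matrix (Fin n) (Fin n) R) + a1 • Pcirc R n) ⊗ₖ
        (Matrix.of fun (_ : Fin k) (_ : Fin k) => (1 : R))) =
      (Nat.factorial k : R) ^ n * ∑ l ∈ Finset.range (k + 1),
        (Nat.choose k l : R) ^ n * (a0 ^ (k - l) * a1 ^ l) ^ n := by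
  rw [rectPer_kronecker_ones]
  simp_rw [smul_one_add_smul_Pcirc_apply]
  rw [sum_prod_sum_mul_ite_eq]
  simp only [Fintype.card_fin]
  refine (sum_congr rfl fun c _ =>
    prod_ite_mul_prod_descFactorial_card_targetBlock_fiber c a0 a1).trans ?_
  -- the two sides differ only in the `Decidable` instance of the condition
  convert sum_ite_rowCount_const (κ := Fin k)
    (fun l => a0 ^ (k - l) * a1 ^ l * (k.factorial : R)) (0 : Fin n) using 3
  rw [mul_sum, Fintype.card_fin, Fintype.card_fin]
  exact sum_congr rfl fun l _ => by ring

theorem stmt0 {R : Type*} [CommRing R] (n k : ℕ) [NeZero n] (hk : 1 ≤ k) (a0 a1 : R) :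
    rectPer ((a0 • (1 : Matrix (Fin n) (Fin n) R) + a1 • Pcirc R n) ⊗ₖ
        (Matrix.of fun (_ : Fin k) (_ : Fin k) => (1 : R))) =
      (Nat.factorial k : R) ^ n * ∑ l ∈ Finset.range (k + 1),
        (Nat.choose k l : R) ^ n * (a0 ^ (k - l) * a1 ^ l) ^ n :=
  stmt0_general n k a0 a1
end

section
/- Let n ≥ 1, t ≥ 1 and k ≥ 1, let a_0, a_t be elements of a commutative ring with unity, and let d = gcd(n,t). Then per((a_0·I_n + a_t·P_n^t) ⊗ J_k) = [ (k!)^{n/d} · Σ_{l=0}^{k} C(k,l)^{n/d} · (a_0^{k−l} a_t^{l})^{n/d} ]^d. -/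
open scoped BigOperators
open Kronecker

/-!
Write the matrix as `A ⊗ J_k` with `A = a₀ I + a_t S`, where `S` is the permutation matrix of
the translation `j ↦ j + τ` of `G = ℤ/n`, `τ = t`. Expanding every factor of a term of the
permanent decides, for each position `(j, p)`, whether it goes to block `j` (weight `a₀`) or to
block `j + τ` (weight `a_t`). Recording the shifted positions of block `j` as `F j ⊆ Fin k`, the
permutations compatible with `F` are those whose block map is `shiftTarget τ F`; there are
`(k!)^n` of them if every block is hit exactly `k` times, i.e. if `j ↦ #(F j)` is `τ`-periodic,
and none otherwise. There are `∏ j, C(k, c j)` families `F` with a given profile `c`, and the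
`τ`-periodic profiles are the functions on the `d = gcd(n, t)` cosets of `⟨τ⟩`, each of size
`n / d`; so the sum factors into the `d`-th power of a single sum over `l = #(F j)`.
-/

open Finset

theorem rectPer_eq_sum_perm {R ι : Type*} [CommRing R] [Fintype ι] [DecidableEq ι]
    (A : Matrix ι ι R) : rectPer A = ∑ σ : Equiv.Perm ι, ∏ i, A i (σ i) :=
  Fintype.sum_equiv (Equiv.embeddingEquivOfFinite ι) _ _ fun _ => rfl

section PermFibers

variable {α β : Type*} [Fintype α] [DecidableEq β]

theorem exists_perm_comp_eq_iff_card_fiber_eq (π g : α → β) :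
    (∃ σ : Equiv.Perm α, π ∘ σ = g) ↔
      ∀ b, Fintype.card {a // g a = b} = Fintype.card {a // π a = b} := by
  constructor
  · rintro ⟨σ, rfl⟩ b
    exact Fintype.card_congr (σ.subtypeEquiv fun _ => Iff.rfl)
  · intro h
    exact ⟨Equiv.ofFiberEquiv fun b => Fintype.equivOfCardEq (h b),
      funext (Equiv.ofFiberEquiv_map _)⟩

theorem card_perm_comp_eq [DecidableEq α] [Fintype β] (π g : α → β) :
    Fintype.card {σ : Equiv.Perm α // π ∘ σ = g} =
      if ∀ b, Fintype.card {a // g a = b} = Fintype.card {a // π a = b} then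
        ∏ b, (Fintype.card {a // π a = b}).factorial
      else 0 := by
  split_ifs with h
  · obtain ⟨σ₀, hσ₀⟩ := (exists_perm_comp_eq_iff_card_fiber_eq π g).2 h
    rw [← DomMulAct.stabilizer_card π]
    refine Fintype.card_congr ((Equiv.mulRight σ₀⁻¹).subtypeEquiv fun σ => ?_)
    change π ∘ σ = g ↔ (π ∘ σ) ∘ σ₀.symm = π
    rw [Equiv.comp_symm_eq, hσ₀]
  · rw [Fintype.card_eq_zero_iff]
    exact ⟨fun σ => h ((exists_perm_comp_eq_iff_card_fiber_eq π g).1 ⟨σ.1, σ.2⟩)⟩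

end PermFibers

theorem Finset.card_filter_fst_eq_and_snd_mem {α β : Type*} [Fintype α] [DecidableEq α]
    [Fintype β] [DecidableEq β] (a : α) (s : α → Finset β) :
    #{x : α × β | x.1 = a ∧ x.2 ∈ s x.1} = #(s a) := by
  rw [show ({x : α × β | x.1 = a ∧ x.2 ∈ s x.1} : Finset (α × β)) = {a} ×ˢ s a by
    ext ⟨x, y⟩
    simp only [mem_filter, mem_univ, true_and, mem_product, mem_singleton]
    constructor <;> rintro ⟨rfl, h⟩ <;> exact ⟨rfl, h⟩]
  simp

theorem Fintype.card_fiber_fst {α β : Type*} [Fintype α] [DecidableEq α] [Fintype β]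
    (a : α) : Fintype.card {x : α × β // x.1 = a} = Fintype.card β := by
  classical
  simpa [Fintype.card_subtype] using
    Finset.card_filter_fst_eq_and_snd_mem (β := β) a fun _ => univ

theorem Fintype.prod_add_eq_sum_prod_ite {R ι : Type*} [CommSemiring R] [Fintype ι]
    [DecidableEq ι] (f g : ι → R) :
    ∏ a, (f a + g a) = ∑ t : Finset ι, ∏ a, if a ∈ t then f a else g a := by
  rw [Fintype.prod_add]
  refine Fintype.sum_congr _ _ fun t => ?_
  rw [Finset.prod_ite, Finset.filter_mem_eq_inter, Finset.univ_inter]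
  congr 2
  ext
  simp

theorem Fintype.prod_prod_add_eq_sum_prod_ite {R ι κ : Type*} [CommSemiring R] [Fintype ι]
    [DecidableEq ι] [Fintype κ] [DecidableEq κ] (f g : ι × κ → R) :
    ∏ x, (f x + g x) = ∑ F : ι → Finset κ, ∏ x, if x.2 ∈ F x.1 then f x else g x := by
  rw [Fintype.prod_prod_type]
  simp_rw [Fintype.prod_add_eq_sum_prod_ite]
  rw [Fintype.prod_sum]
  simp only [Fintype.prod_prod_type]

theorem Fintype.sum_comp_eq_sum_smul {M ι S T : Type*} [AddCommMonoid M] [Fintype ι]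
    [DecidableEq ι] [Fintype S] [Fintype T] [DecidableEq T] (φ : S → T) (f : (ι → T) → M) :
    ∑ F : ι → S, f (φ ∘ F) = ∑ c : ι → T, (∏ i, Fintype.card {s // φ s = c i}) • f c := by
  rw [← Fintype.sum_fiberwise' (fun F : ι → S => φ ∘ F)]
  refine Fintype.sum_congr _ _ fun c => ?_
  rw [Finset.sum_const, Finset.card_univ, ← Fintype.card_pi]
  congr 1
  exact Fintype.card_congr
    ((Equiv.subtypeEquivRight (q := fun F : ι → S => ∀ i, φ (F i) = c i) fun _ => funext_iff).trans
      (Equiv.subtypePiEquivPi (p := fun i s => φ s = c i)))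

theorem QuotientAddGroup.card_fiber_mk {G : Type*} [AddGroup G] (H : AddSubgroup G)
    (q : G ⧸ H) : Nat.card {g : G // (g : G ⧸ H) = q} = Nat.card H := by
  calc Nat.card {g : G // (g : G ⧸ H) = q}
      = Nat.card (H × ({q} : Set (G ⧸ H))) :=
        Nat.card_congr (preimageMkEquivAddSubgroupProdSet H {q})
    _ = Nat.card H := by simp

def Function.periodicEquivQuotient {G S : Type*} [AddGroup G] (τ : G) :
    {c : G → S // Function.Periodic c τ} ≃ (G ⧸ AddSubgroup.zmultiples τ → S) where
  toFun c := c.2.lift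
  invFun c := ⟨c ∘ (↑), fun x => by
    simp only [Function.comp_apply]
    congr 1
    rw [QuotientAddGroup.eq]
    simp⟩
  left_inv c := by ext; simp
  right_inv c := by
    ext q
    induction q using QuotientAddGroup.induction_on
    simp

theorem sum_periodic_prod_eq_pow {R G S : Type*} [CommSemiring R] [AddCommGroup G] [Fintype G]
    [DecidableEq G] [Fintype S] [DecidableEq S] (τ : G) (W : S → R) :
    ∑ c : G → S, (if ∀ j, c (j + τ) = c j then ∏ j, W (c j) else 0) =
      (∑ s, W s ^ addOrderOf τ) ^ (AddSubgroup.zmultiples τ).index := by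
  classical
  set H := AddSubgroup.zmultiples τ
  have prod_comp_mk (c : G ⧸ H → S) : ∏ j : G, W (c j) = ∏ q, W (c q) ^ addOrderOf τ := by
    rw [← Fintype.prod_fiberwise' ((↑) : G → G ⧸ H) fun q => W (c q)]
    refine Fintype.prod_congr _ _ fun q => ?_
    rw [Finset.prod_const, Finset.card_univ, ← Nat.card_eq_fintype_card,
      QuotientAddGroup.card_fiber_mk, Nat.card_zmultiples]
  calc ∑ c : G → S, (if ∀ j, c (j + τ) = c j then ∏ j, W (c j) else 0)
      = ∑ c : {c : G → S // Function.Periodic c τ}, ∏ j, W (c.1 j) := by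
        rw [← Finset.sum_filter]
        exact Finset.sum_subtype _ (by simp [Function.Periodic]) _
    _ = ∑ c : G ⧸ H → S, ∏ j : G, W (c j) :=
        Fintype.sum_equiv (Function.periodicEquivQuotient τ) _ _ fun _ => rfl
    _ = ∏ _q : G ⧸ H, ∑ s, W s ^ addOrderOf τ := by
        simp only [prod_comp_mk, Fintype.prod_sum]
    _ = _ := by
        rw [Finset.prod_const, Finset.card_univ, AddSubgroup.index, Nat.card_eq_fintype_card]

section ShiftMatrix

variable (R : Type*) {G : Type*} [DecidableEq G]

def shiftMatrix [Zero R] [One R] [Add G] (τ : G) : Matrix G G R :=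
  Matrix.of fun i j => if j = i + τ then 1 else 0

variable [Semiring R] [AddMonoid G]

theorem shiftMatrix_zero : shiftMatrix R (0 : G) = 1 := by
  ext i j
  simp [shiftMatrix, Matrix.one_apply, eq_comm]

theorem shiftMatrix_add [Fintype G] (τ τ' : G) :
    shiftMatrix R (τ + τ') = shiftMatrix R τ * shiftMatrix R τ' := by
  ext i j
  simp only [shiftMatrix, Matrix.mul_apply, Matrix.of_apply, boole_mul, Finset.sum_ite_eq',
    Finset.mem_univ, if_true, add_assoc]

end ShiftMatrix

theorem Pcirc_eq_shiftMatrix (R : Type*) [CommRing R] (n : ℕ) [NeZero n] :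
    Pcirc R n = shiftMatrix R (1 : Fin n) :=
  rfl

theorem Pcirc_pow (R : Type*) [CommRing R] (n t : ℕ) [NeZero n] :
    Pcirc R n ^ t = shiftMatrix R (t • (1 : Fin n)) := by
  induction t with
  | zero => rw [pow_zero, zero_nsmul, shiftMatrix_zero]
  | succ t ih => rw [pow_succ, ih, Pcirc_eq_shiftMatrix, succ_nsmul, shiftMatrix_add]

section ShiftedBlocks

variable {G : Type*} [AddCommGroup G] [Fintype G] [DecidableEq G] {k : ℕ}

def shiftTarget (τ : G) (F : G → Finset (Fin k)) (x : G × Fin k) : G :=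
  if x.2 ∈ F x.1 then x.1 + τ else x.1

theorem card_fiber_shiftTarget (τ : G) (F : G → Finset (Fin k)) (j : G) :
    Fintype.card {x // shiftTarget τ F x = j} = #(F (j - τ)) + (k - #(F j)) := by
  have split (x : G × Fin k) : (if shiftTarget τ F x = j then 1 else 0) =
      (if x.1 = j - τ ∧ x.2 ∈ F x.1 then 1 else 0) +
        (if x.1 = j ∧ x.2 ∈ (F x.1)ᶜ then 1 else 0) := by
    obtain ⟨i, p⟩ := x
    by_cases hp : p ∈ F i <;> simp [shiftTarget, hp, eq_sub_iff_add_eq]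
  rw [Fintype.card_subtype, Finset.card_filter, Finset.sum_congr rfl fun x _ => split x,
    Finset.sum_add_distrib, ← Finset.card_filter, ← Finset.card_filter,
    Finset.card_filter_fst_eq_and_snd_mem,
    Finset.card_filter_fst_eq_and_snd_mem (s := fun i => (F i)ᶜ), Finset.card_compl,
    Fintype.card_fin]

theorem card_fiber_shiftTarget_eq_iff (τ : G) (F : G → Finset (Fin k)) :
    (∀ j, Fintype.card {x // shiftTarget τ F x = j} =
        Fintype.card {x : G × Fin k // x.1 = j}) ↔ ∀ j, #(F (j + τ)) = #(F j) := by
  have hle (j : G) : #(F j) ≤ k := by simpa using (F j).card_le_univ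
  simp only [card_fiber_shiftTarget, Fintype.card_fiber_fst, Fintype.card_fin]
  constructor
  · intro h j
    have := h (j + τ)
    rw [add_sub_cancel_right] at this
    have := hle j
    have := hle (j + τ)
    omega
  · intro h j
    have := h (j - τ)
    rw [sub_add_cancel] at this
    have := hle j
    omega

theorem card_perm_fst_comp_eq_shiftTarget (τ : G) (F : G → Finset (Fin k)) :
    Fintype.card {σ : Equiv.Perm (G × Fin k) // Prod.fst ∘ σ = shiftTarget τ F} =
      if ∀ j, #(F (j + τ)) = #(F j) then k.factorial ^ Fintype.card G else 0 := by
  rw [card_perm_comp_eq, if_congr (card_fiber_shiftTarget_eq_iff τ F) rfl rfl]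
  simp only [Fintype.card_fiber_fst, Fintype.card_fin, Finset.prod_const, Finset.card_univ]

variable {R : Type*} [CommRing R]

theorem prod_shift_kronecker_ones_eq_sum (a0 at' : R) (τ : G) (σ : Equiv.Perm (G × Fin k)) :
    ∏ x, ((a0 • (1 : Matrix G G R) + at' • shiftMatrix R τ) ⊗ₖ
        Matrix.of fun (_ : Fin k) (_ : Fin k) => (1 : R)) x (σ x) =
      ∑ F : G → Finset (Fin k), (∏ j, a0 ^ (k - #(F j)) * at' ^ #(F j)) *
        if Prod.fst ∘ σ = shiftTarget τ F then 1 else 0 := by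
  have entry (x y : G × Fin k) : ((a0 • (1 : Matrix G G R) + at' • shiftMatrix R τ) ⊗ₖ
      Matrix.of fun (_ : Fin k) (_ : Fin k) => (1 : R)) x y =
      (if y.1 = x.1 + τ then at' else 0) + (if y.1 = x.1 then a0 else 0) := by
    simp [shiftMatrix, Matrix.one_apply, eq_comm, add_comm]
  have pick (F : G → Finset (Fin k)) (x : G × Fin k) :
      (if x.2 ∈ F x.1 then (if (σ x).1 = x.1 + τ then at' else 0)
        else (if (σ x).1 = x.1 then a0 else 0)) =
      (if x.2 ∈ F x.1 then at' else a0) * (if (σ x).1 = shiftTarget τ F x then 1 else 0) := by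
    unfold shiftTarget
    split_ifs <;> simp_all
  have weight (F : G → Finset (Fin k)) : ∏ x : G × Fin k, (if x.2 ∈ F x.1 then at' else a0) =
      ∏ j, a0 ^ (k - #(F j)) * at' ^ #(F j) := by
    rw [Fintype.prod_prod_type]
    refine Fintype.prod_congr _ _ fun j => ?_
    simp [Finset.prod_ite, Finset.filter_not, Finset.card_sdiff, mul_comm]
  simp only [entry, Fintype.prod_prod_add_eq_sum_prod_ite, pick]
  refine Fintype.sum_congr _ _ fun F => ?_
  rw [Finset.prod_mul_distrib, weight, Fintype.prod_boole]
  simp only [funext_iff, Function.comp_apply]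

theorem rectPer_shift_kronecker_ones_eq_sum (a0 at' : R) (τ : G) :
    rectPer ((a0 • (1 : Matrix G G R) + at' • shiftMatrix R τ) ⊗ₖ
        Matrix.of fun (_ : Fin k) (_ : Fin k) => (1 : R)) =
      (k.factorial ^ Fintype.card G : ℕ) * ∑ F : G → Finset (Fin k),
        if ∀ j, #(F (j + τ)) = #(F j) then ∏ j, a0 ^ (k - #(F j)) * at' ^ #(F j) else 0 := by
  rw [rectPer_eq_sum_perm]
  simp_rw [prod_shift_kronecker_ones_eq_sum]
  rw [Finset.sum_comm, Finset.mul_sum]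
  refine Fintype.sum_congr _ _ fun F => ?_
  rw [← Finset.mul_sum, Finset.sum_boole, ← Fintype.card_subtype,
    card_perm_fst_comp_eq_shiftTarget]
  split_ifs <;> simp [mul_comm]

theorem rectPer_shift_kronecker_ones (a0 at' : R) (τ : G) :
    rectPer ((a0 • (1 : Matrix G G R) + at' • shiftMatrix R τ) ⊗ₖ
        Matrix.of fun (_ : Fin k) (_ : Fin k) => (1 : R)) =
      (k.factorial ^ Fintype.card G : ℕ) * (∑ l : Fin (k + 1),
        ((k.choose l : R) * (a0 ^ (k - l) * at' ^ (l : ℕ))) ^ addOrderOf τ) ^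
          (AddSubgroup.zmultiples τ).index := by
  let card' (s : Finset (Fin k)) : Fin (k + 1) :=
    ⟨#s, Nat.lt_succ_of_le (by simpa using s.card_le_univ)⟩
  have card_fiber_card' (l : Fin (k + 1)) : Fintype.card {s // card' s = l} = k.choose l :=
    (Fintype.card_congr (Equiv.subtypeEquivRight (q := fun s => #s = (l : ℕ))
      fun _ => Fin.ext_iff)).trans (by simp)
  rw [rectPer_shift_kronecker_ones_eq_sum, ← sum_periodic_prod_eq_pow]
  congr 1
  refine Eq.trans ?_ ((Fintype.sum_comp_eq_sum_smul card' fun c : G → Fin (k + 1) =>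
    if ∀ j, c (j + τ) = c j then ∏ j, a0 ^ (k - c j) * at' ^ (c j : ℕ) else 0).trans
      (Fintype.sum_congr _ _ fun c => ?_))
  · simp only [Function.comp_apply, Fin.ext_iff, card']
  · simp only [card_fiber_card', nsmul_eq_mul, Nat.cast_prod, mul_ite, mul_zero,
      ← Finset.prod_mul_distrib]

end ShiftedBlocks

theorem Fin.addOrderOf_nsmul_one (n t : ℕ) [NeZero n] :
    addOrderOf (t • (1 : Fin n)) = n / n.gcd t := by
  rw [addOrderOf_nsmul, ← (ZMod.finEquiv n).toAddEquiv.addOrderOf_eq]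
  simp [ZMod.addOrderOf_one]

theorem Fin.index_zmultiples_nsmul_one (n t : ℕ) [NeZero n] :
    (AddSubgroup.zmultiples (t • (1 : Fin n))).index = n.gcd t := by
  have h := (AddSubgroup.zmultiples (t • (1 : Fin n))).index_mul_card
  rw [Nat.card_zmultiples, Fin.addOrderOf_nsmul_one, Nat.card_eq_fintype_card,
    Fintype.card_fin] at h
  have hpos : 0 < n / n.gcd t :=
    Nat.div_pos (Nat.gcd_le_left t (NeZero.pos n)) (Nat.gcd_pos_of_pos_left t (NeZero.pos n))
  exact Nat.eq_of_mul_eq_mul_right hpos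
    (h.trans (Nat.mul_div_cancel' (Nat.gcd_dvd_left n t)).symm)

theorem stmt1_general {R : Type*} [CommRing R] (n t k : ℕ) [NeZero n]
    (a0 at' : R) :
    rectPer ((a0 • (1 : Matrix (Fin n) (Fin n) R) + at' • (Pcirc R n) ^ t) ⊗ₖ
        (Matrix.of fun (_ : Fin k) (_ : Fin k) => (1 : R))) =
      ((Nat.factorial k : R) ^ (n / Nat.gcd n t) * ∑ l ∈ Finset.range (k + 1),
          (Nat.choose k l : R) ^ (n / Nat.gcd n t) *
            (a0 ^ (k - l) * at' ^ l) ^ (n / Nat.gcd n t)) ^ (Nat.gcd n t) := by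
  rw [Pcirc_pow, rectPer_shift_kronecker_ones, Fin.addOrderOf_nsmul_one,
    Fin.index_zmultiples_nsmul_one, Fintype.card_fin, mul_pow, ← pow_mul,
    Nat.div_mul_cancel (Nat.gcd_dvd_left n t),
    Fin.sum_univ_eq_sum_range fun l =>
      ((k.choose l : R) * (a0 ^ (k - l) * at' ^ l)) ^ (n / n.gcd t)]
  simp [mul_pow]

theorem stmt1 {R : Type*} [CommRing R] (n t k : ℕ) [NeZero n] (ht : 1 ≤ t) (hk : 1 ≤ k)
    (a0 at' : R) :
    rectPer ((a0 • (1 : Matrix (Fin n) (Fin n) R) + at' • (Pcirc R n) ^ t) ⊗ₖ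
        (Matrix.of fun (_ : Fin k) (_ : Fin k) => (1 : R))) =
      ((Nat.factorial k : R) ^ (n / Nat.gcd n t) * ∑ l ∈ Finset.range (k + 1),
          (Nat.choose k l : R) ^ (n / Nat.gcd n t) *
            (a0 ^ (k - l) * at' ^ l) ^ (n / Nat.gcd n t)) ^ (Nat.gcd n t) :=
  stmt1_general n t k a0 at'
end

section
/- Let a_0, a_1 be elements of a commutative ring with unity, and let n ≥ 1 and k ≥ 1. Then R(x; (a_0·I_n + a_1·P_n) ⊗ J_k) = Σ over all pairs of vectors (l_1^{(1)},…,l_n^{(1)}), (l_1^{(2)},…,l_n^{(2)}) ∈ {0,1,…,k}^n satisfying l_i^{(2)} ≤ min(k − l_i^{(1)}, k − l_{(i mod n)+1}^{(1)}) for 1 ≤ i ≤ n, of [ Π_{i=1}^{n} C(k, l_i^{(1)}) · C(k − l_{(i mod n)+1}^{(1)}, l_i^{(2)}) · C(k, l_i^{(1)} + l_i^{(2)}) · (l_i^{(1)} + l_i^{(2)})! ] · a_0^{Σ_{i=1}^n l_i^{(1)}} · a_1^{Σ_{i=1}^n l_i^{(2)}} · x^{Σ_{i=1}^n (l_i^{(1)}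 + l_i^{(2)})}. -/
open scoped BigOperators
open Kronecker

/-- The rook polynomial `R(x;A)` of a rectangular matrix, evaluated at a ring element `x`:
`R(x;A) = ∑_{S ⊆ rows} ∑_{σ : S ↪ cols} x^{|S|} ∏_{i ∈ S} A i (σ i)`
(the empty set contributes the constant term `1`). -/
noncomputable def rookPoly {R : Type*} [CommRing R] {ι κ : Type*} [Fintype ι] [Fintype κ]
    [DecidableEq ι] [DecidableEq κ] (x : R) (A : Matrix ι κ R) : R :=
  ∑ S : Finset ι, ∑ σ : {i // i ∈ S} ↪ κ, x ^ S.card * ∏ i : {i // i ∈ S}, A i.1 (σ i)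

/-!
Expanding every entry `a0 [j = i] + a1 [j = i + 1]` turns a weighted rook placement into a sum
of placements whose rooks lie in the diagonal blocks `(i, i)` (weight `x * a0`) or in the blocks
`(i, i + 1)` (weight `x * a1`); for `n = 1` these blocks coincide and both terms survive.
In block row `i` such a placement is given by
the set `A i` of columns used in block `(i, i)`, the set `Q i` of columns used in block
`(i, i + 1)`, and an injection of `A i ⊔ Q i` into the `k` rows, of which there are
`k.descFactorial (#A i + #Q i) = C(k, #A i + #Q i) (#A i + #Q i)!`. Block rows interact only
through the requirement that `Q i` and `A (i + 1)`, which lie in the same column block, be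
disjoint. Counting the `Q i ⊆ (A (i + 1))ᶜ` and then the `A i` by cardinality produces the
remaining binomial coefficients.
-/

open Finset

section PartialInjective

variable {ι κ : Type*}

def PartialInjective (f : ι → Option κ) : Prop :=
  ∀ ⦃i i' : ι⦄ ⦃j : κ⦄, f i = some j → f i' = some j → i = i'

instance [Fintype ι] [DecidableEq ι] [Fintype κ] [DecidableEq κ] :
    DecidablePred (PartialInjective (ι := ι) (κ := κ)) :=
  fun f => by unfold PartialInjective; infer_instance

variable [Fintype ι] [DecidableEq κ]

def partialRange (f : ι → Option κ) : Finset κ :=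
  univ.biUnion fun i => (f i).toFinset

theorem mem_partialRange {f : ι → Option κ} {j : κ} :
    j ∈ partialRange f ↔ ∃ i, f i = some j := by
  simp [partialRange]

theorem prod_elim_eq_prod_partialRange {M : Type*} [CommMonoid M] {f : ι → Option κ}
    (hf : PartialInjective f) (w : κ → M) :
    ∏ i, (f i).elim 1 w = ∏ j ∈ partialRange f, w j := by
  rw [partialRange, prod_biUnion]
  · refine prod_congr rfl fun i _ => ?_
    cases f i <;> simp
  · intro i _ i' _ hii'
    rw [Function.onFun, disjoint_left]
    intro j hj hj'
    simp only [Option.mem_toFinset, Option.mem_def] at hj hj'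
    exact hii' (hf hj hj')

theorem card_partialInjective_partialRange_eq [DecidableEq ι] [Fintype κ] (B : Finset κ) :
    #{f : ι → Option κ | PartialInjective f ∧ partialRange f = B} =
      (Fintype.card ι).descFactorial #B := by
  rw [← Fintype.card_coe B, ← Fintype.card_embedding_eq, ← card_univ]
  have key : ∀ (e : B ↪ ι) (i : ι) (j : κ),
      (Function.partialInv e i).map Subtype.val = some j ↔ ∃ h : j ∈ B, e ⟨j, h⟩ = i := by
    intro e i j
    rw [Option.map_eq_some_iff]
    constructor
    · rintro ⟨b, hb, rfl⟩
      exact ⟨b.2, (e.injective.isPartialInv b i).1 hb⟩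
    · rintro ⟨h, hi⟩
      exact ⟨⟨j, h⟩, (e.injective.isPartialInv _ i).2 hi, rfl⟩
  symm
  refine card_bij (fun e _ i => (Function.partialInv e i).map Subtype.val) ?_ ?_ ?_
  · intro e _
    simp only [mem_filter, mem_univ, true_and]
    refine ⟨fun i i' j hi hi' => ?_, ?_⟩
    · obtain ⟨h, rfl⟩ := (key e i j).1 hi
      obtain ⟨h', rfl⟩ := (key e i' j).1 hi'
      rfl
    · ext j
      simp only [mem_partialRange, key]
      exact ⟨fun ⟨_, h, _⟩ => h, fun h => ⟨_, h, rfl⟩⟩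
  · intro e _ e' _ hee'
    ext b
    obtain ⟨_, h⟩ := (key e' (e b) b).1
      (by rw [← congrFun hee' (e b)]; exact (key e _ _).2 ⟨b.2, rfl⟩)
    exact h.symm
  · intro f hf
    simp only [mem_filter, mem_univ, true_and] at hf
    obtain ⟨hinj, rfl⟩ := hf
    have hex : ∀ b : partialRange f, ∃ i, f i = some b.1 := fun b => mem_partialRange.1 b.2
    choose e he using hex
    have einj : Function.Injective e := fun b b' h =>
      Subtype.ext (Option.some_injective _ ((he b).symm.trans (h ▸ he b')))
    refine ⟨⟨e, einj⟩, mem_univ _, funext fun i => Option.ext fun j => ?_⟩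
    rw [key]
    constructor
    · rintro ⟨h, rfl⟩
      exact he _
    · intro hij
      exact ⟨mem_partialRange.2 ⟨i, hij⟩, hinj (he _) hij⟩

end PartialInjective

theorem sum_prod_mul_comp_eq_sum_prod_fiber {ι β γ M : Type*} [Fintype ι] [DecidableEq ι]
    [Fintype β] [Fintype γ] [DecidableEq γ] [CommSemiring M]
    (L : ι → β → γ) (w : ι → β → M) (F : (ι → γ) → M) :
    ∑ π : ι → β, (∏ i, w i (π i)) * F (fun i => L i (π i)) =
      ∑ f : ι → γ, (∏ i, ∑ b with L i b = f i, w i b) * F f := by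
  rw [← sum_fiberwise univ (fun π i => L i (π i))]
  refine sum_congr rfl fun f _ => ?_
  rw [prod_univ_sum, sum_mul]
  refine sum_congr ?_ fun π hπ => ?_
  · ext π
    simp [funext_iff]
  · have hLπ : (fun i => L i (π i)) = f :=
      funext fun i => by simpa using Fintype.mem_piFinset.1 hπ i
    rw [hLπ]

theorem rookPoly_eq_sum_partialInjective {R ι κ : Type*} [CommRing R] [Fintype ι] [Fintype κ]
    [DecidableEq ι] [DecidableEq κ] (x : R) (A : Matrix ι κ R) :
    rookPoly x A =
      ∑ f : ι → Option κ with PartialInjective f, ∏ i, (f i).elim 1 fun j => x * A i j := by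
  rw [rookPoly, ← sum_fiberwise_of_maps_to (t := univ)
    (g := fun f : ι → Option κ => ({i | (f i).isSome} : Finset ι)) fun _ _ => mem_univ _]
  refine sum_congr rfl fun S _ => ?_
  rw [filter_filter]
  refine sum_bij (fun σ _ i => if h : i ∈ S then some (σ ⟨i, h⟩) else none) ?_ ?_ ?_ ?_
  · intro σ _
    simp only [mem_filter, mem_univ, true_and]
    refine ⟨fun i i' j hi hi' => ?_, by ext i; simp⟩
    simp only at hi hi'
    split_ifs at hi hi' with h h'
    exact congrArg Subtype.val (σ.injective (Option.some_injective _ (hi.trans hi'.symm)))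
  · intro σ _ σ' _ h
    ext i
    simpa using congrFun h i
  · intro f hf
    simp only [mem_filter, mem_univ, true_and] at hf
    obtain ⟨hinj, rfl⟩ := hf
    have hsome : ∀ i : {i // i ∈ ({i | (f i).isSome} : Finset ι)}, (f i).isSome := fun i =>
      (mem_filter.1 i.2).2
    refine ⟨⟨fun i => (f i).get (hsome i), fun i i' h => Subtype.ext <|
      hinj (Option.eq_some_of_isSome (hsome i)) <| by
        simp only at h; rw [h]; exact Option.eq_some_of_isSome _⟩,
      mem_univ _, funext fun i => ?_⟩
    split_ifs with h
    · exact Option.some_get _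
    · exact (by simpa using h : f i = none).symm
  · intro σ _
    calc x ^ #S * ∏ i : S, A i (σ i) = ∏ i : S, x * A i (σ i) := by
          rw [prod_mul_distrib, prod_const, card_univ, Fintype.card_coe]
      _ = ∏ i ∈ S,
            (if h : i ∈ S then some (σ ⟨i, h⟩) else none).elim 1 fun j => x * A i j := by
          rw [← prod_coe_sort S]
          exact prod_congr rfl fun i _ => by simp
      _ = _ := prod_subset (subset_univ S) fun i _ hi => by simp [hi]

section CardinalitySums

variable {M : Type*} {k : ℕ}

theorem sum_disjoint_eq_sum_choose [AddCommMonoid M] (B : Finset (Fin k)) (φ : ℕ → M) :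
    ∑ Q : Finset (Fin k) with Disjoint Q B, φ #Q =
      ∑ m : Fin (k + 1), (k - #B).choose m • φ m := by
  have hQ : ({Q | Disjoint Q B} : Finset (Finset (Fin k))) = Bᶜ.powerset := by
    ext Q
    simp [subset_compl_iff_disjoint_right]
  rw [hQ, sum_powerset_apply_card, card_compl, Fintype.card_fin,
    Fin.sum_univ_eq_sum_range fun m => (k - #B).choose m • φ m]
  exact sum_subset (range_subset_range.2 (by omega)) fun m _ hm => by
    rw [Nat.choose_eq_zero_of_lt (by simpa using hm), zero_smul]

theorem sum_pi_finset_eq_sum_card {ι : Type*} [Fintype ι] [DecidableEq ι] [CommSemiring M]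
    (Ψ : (ι → ℕ) → M) :
    ∑ A : ι → Finset (Fin k), Ψ (fun i => #(A i)) =
      ∑ l : ι → Fin (k + 1), (∏ i, (k.choose (l i) : M)) * Ψ (fun i => l i) := by
  have h := sum_prod_mul_comp_eq_sum_prod_fiber
    (fun (_ : ι) (A : Finset (Fin k)) =>
      (⟨#A, Nat.lt_succ_of_le (card_finset_fin_le A)⟩ : Fin (k + 1)))
    (fun _ _ => (1 : M)) fun l => Ψ fun i => l i
  simp only [prod_const_one, one_mul] at h
  rw [h]
  refine sum_congr rfl fun l _ => ?_
  simp [Fin.ext_iff]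

end CardinalitySums

section BlockCirculant

variable {R : Type*} [CommRing R] {n k : ℕ} [NeZero n]

/-- In block row `i`, `inl q` stands for column `q` of the diagonal block `(i, i)` and `inr q`
for column `q` of the block `(i, i + 1)`. -/
def blockColumn (i : Fin n) : Fin k ⊕ Fin k → Fin n × Fin k :=
  Sum.elim (fun q => (i, q)) fun q => (i + 1, q)

def colourWeight (x a0 a1 : R) : Fin k ⊕ Fin k → R :=
  Sum.elim (fun _ => x * a0) fun _ => x * a1

theorem elim_entry_eq_sum_colourings (x a0 a1 : R) (i : Fin n) (o : Option (Fin n × Fin k)) :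
    o.elim 1 (fun c => x * ((if c.1 = i then a0 else 0) + (if c.1 = i + 1 then a1 else 0))) =
      ∑ t : Option (Fin k ⊕ Fin k) with t.map (blockColumn i) = o,
        t.elim 1 (colourWeight x a0 a1) := by
  rw [sum_filter]
  rcases o with _ | ⟨j, q⟩
  · simp
  · simp [Fintype.sum_option, Fintype.sum_sum_type, blockColumn, colourWeight, mul_add, ite_and,
      eq_comm (a := j)]

theorem rookPoly_eq_sum_colourings (x a0 a1 : R) (M : Matrix (Fin n × Fin k) (Fin n × Fin k) R)
    (hM : ∀ a c, M a c = (if c.1 = a.1 then a0 else 0) + (if c.1 = a.1 + 1 then a1 else 0)) :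
    rookPoly x M = ∑ π : Fin n → Fin k → Option (Fin k ⊕ Fin k),
      (∏ i, ∏ p, (π i p).elim 1 (colourWeight x a0 a1)) *
        if PartialInjective fun a : Fin n × Fin k => (π a.1 a.2).map (blockColumn a.1) then 1
        else 0 := by
  rw [rookPoly_eq_sum_partialInjective, sum_filter]
  simp_rw [hM, elim_entry_eq_sum_colourings]
  refine (sum_congr rfl fun f _ => (mul_boole _ _).symm).trans ?_
  rw [← sum_prod_mul_comp_eq_sum_prod_fiber
    (fun (a : Fin n × Fin k) (t : Option (Fin k ⊕ Fin k)) => t.map (blockColumn a.1))]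
  refine Fintype.sum_equiv (Equiv.curry _ _ _) _ _ fun τ => ?_
  rw [Fintype.prod_prod_type]
  rfl

theorem partialInjective_blockColumn_iff (π : Fin n → Fin k → Option (Fin k ⊕ Fin k)) :
    PartialInjective (fun a : Fin n × Fin k => (π a.1 a.2).map (blockColumn a.1)) ↔
      ∀ i, PartialInjective (π i) ∧
        Disjoint (partialRange (π i)).toRight (partialRange (π (i + 1))).toLeft := by
  constructor
  · intro h i
    refine ⟨fun p p' t hp hp' => ?_, disjoint_left.2 fun q hq hq' => ?_⟩
    · exact congrArg Prod.snd (h (i := (i, p)) (i' := (i, p')) (j := blockColumn i t)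
        (by simp [hp]) (by simp [hp']))
    · obtain ⟨p, hp⟩ := mem_partialRange.1 (mem_toRight.1 hq)
      obtain ⟨p', hp'⟩ := mem_partialRange.1 (mem_toLeft.1 hq')
      have hpp' := h (i := (i, p)) (i' := (i + 1, p')) (j := (i + 1, q))
        (by simp [hp, blockColumn]) (by simp [hp', blockColumn])
      simp only [Prod.mk.injEq] at hpp'
      obtain ⟨hi, rfl⟩ := hpp'
      rw [← hi, hp] at hp'
      cases hp'
  · rintro h ⟨i, p⟩ ⟨i', p'⟩ c hc hc'
    simp only [Option.map_eq_some_iff] at hc hc'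
    obtain ⟨t, ht, rfl⟩ := hc
    obtain ⟨t', ht', hcc⟩ := hc'
    rcases t with q | q <;> rcases t' with q' | q' <;>
      simp only [blockColumn, Sum.elim_inl, Sum.elim_inr, Prod.mk.injEq] at hcc <;>
      obtain ⟨hii', rfl⟩ := hcc
    · subst hii'
      rw [(h i').1 ht ht']
    · exfalso
      subst hii'
      exact disjoint_left.1 (h i').2 (mem_toRight.2 (mem_partialRange.2 ⟨p', ht'⟩))
        (mem_toLeft.2 (mem_partialRange.2 ⟨p, ht⟩))
    · exfalso
      subst hii'
      exact disjoint_left.1 (h i).2 (mem_toRight.2 (mem_partialRange.2 ⟨p, ht⟩))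
        (mem_toLeft.2 (mem_partialRange.2 ⟨p', ht'⟩))
    · obtain rfl := add_right_cancel hii'
      rw [(h i').1 ht ht']

theorem prod_colourWeight {g : Fin k → Option (Fin k ⊕ Fin k)} (hg : PartialInjective g)
    (x a0 a1 : R) :
    ∏ p, (g p).elim 1 (colourWeight x a0 a1) =
      (x * a0) ^ #(partialRange g).toLeft * (x * a1) ^ #(partialRange g).toRight := by
  rw [prod_elim_eq_prod_partialRange hg]
  conv_lhs => rw [← toLeft_disjSum_toRight (u := partialRange g)]
  simp [prod_disjSum, colourWeight]

theorem card_toLeft_toRight_partialRange_eq (AQ : Finset (Fin k) × Finset (Fin k)) :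
    #{g : Fin k → Option (Fin k ⊕ Fin k) |
        ((partialRange g).toLeft, (partialRange g).toRight) = AQ ∧ PartialInjective g} =
      k.descFactorial (#AQ.1 + #AQ.2) := by
  simp_rw [Prod.ext_iff, ← eq_disjSum_iff, and_comm (a := partialRange _ = _)]
  rw [card_partialInjective_partialRange_eq, card_disjSum, Fintype.card_fin]

def blockWeight (k : ℕ) (x a0 a1 : R) (u v : ℕ) : R :=
  k.descFactorial (u + v) * (x * a0) ^ u * (x * a1) ^ v

theorem rookPoly_eq_sum_blockRanges (x a0 a1 : R) (M : Matrix (Fin n × Fin k) (Fin n × Fin k) R)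
    (hM : ∀ a c, M a c = (if c.1 = a.1 then a0 else 0) + (if c.1 = a.1 + 1 then a1 else 0)) :
    rookPoly x M = ∑ AQ : Fin n → Finset (Fin k) × Finset (Fin k), ∏ i,
      if Disjoint (AQ i).2 (AQ (i + 1)).1 then blockWeight k x a0 a1 #(AQ i).1 #(AQ i).2
      else 0 := by
  set F : (Fin n → Finset (Fin k) × Finset (Fin k)) → R := fun AQ => ∏ i,
    if Disjoint (AQ i).2 (AQ (i + 1)).1 then (x * a0) ^ #(AQ i).1 * (x * a1) ^ #(AQ i).2 else 0
  have hterm : ∀ π : Fin n → Fin k → Option (Fin k ⊕ Fin k),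
      ((∏ i, ∏ p, (π i p).elim 1 (colourWeight x a0 a1)) *
        if PartialInjective fun a : Fin n × Fin k => (π a.1 a.2).map (blockColumn a.1) then 1
        else 0) =
      (∏ i, if PartialInjective (π i) then 1 else 0) *
        F fun i => ((partialRange (π i)).toLeft, (partialRange (π i)).toRight) := by
    intro π
    simp_rw [partialInjective_blockColumn_iff, Fintype.prod_boole]
    by_cases hπ : ∀ i, PartialInjective (π i)
    · simp only [hπ, true_and, F, Fintype.prod_ite_zero, mul_boole, implies_true, if_true,
        one_mul]
      exact if_congr Iff.rfl (prod_congr rfl fun i _ => prod_colourWeight (hπ i) x a0 a1) rfl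
    · simp [hπ, forall_and]
  rw [rookPoly_eq_sum_colourings x a0 a1 M hM]
  simp_rw [hterm]
  rw [sum_prod_mul_comp_eq_sum_prod_fiber
    (fun (_ : Fin n) (g : Fin k → Option (Fin k ⊕ Fin k)) =>
      ((partialRange g).toLeft, (partialRange g).toRight))
    (fun _ g => if PartialInjective g then 1 else 0) F]
  refine sum_congr rfl fun AQ _ => ?_
  simp only [sum_boole, filter_filter, card_toLeft_toRight_partialRange_eq, F, ← prod_mul_distrib,
    mul_ite, mul_zero, blockWeight, mul_assoc]

theorem rookPoly_eq_sum_cards (x a0 a1 : R) (M : Matrix (Fin n × Fin k) (Fin n × Fin k) R)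
    (hM : ∀ a c, M a c = (if c.1 = a.1 then a0 else 0) + (if c.1 = a.1 + 1 then a1 else 0)) :
    rookPoly x M = ∑ l1 : Fin n → Fin (k + 1), ∑ l2 : Fin n → Fin (k + 1),
      (∏ i, (k.choose (l1 i) : R) * ((k - l1 (i + 1)).choose (l2 i) : R) *
        (k.choose (l1 i + l2 i) : R) * ((l1 i + l2 i : ℕ).factorial : R)) *
      a0 ^ (∑ i, (l1 i : ℕ)) * a1 ^ (∑ i, (l2 i : ℕ)) *
        x ^ (∑ i, ((l1 i : ℕ) + l2 i)) :=
  calc rookPoly x M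
    _ = ∑ AQ : Fin n → Finset (Fin k) × Finset (Fin k), ∏ i,
          if Disjoint (AQ i).2 (AQ (i + 1)).1 then blockWeight k x a0 a1 #(AQ i).1 #(AQ i).2
          else 0 :=
        rookPoly_eq_sum_blockRanges x a0 a1 M hM
    _ = ∑ A : Fin n → Finset (Fin k), ∑ Q : Fin n → Finset (Fin k), ∏ i,
          if Disjoint (Q i) (A (i + 1)) then blockWeight k x a0 a1 #(A i) #(Q i) else 0 := by
        rw [← Fintype.sum_prod_type']
        exact Fintype.sum_equiv (Equiv.arrowProdEquivProdArrow _ _ _) _ _ fun _ => rfl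
    _ = ∑ A : Fin n → Finset (Fin k), ∑ l2 : Fin n → Fin (k + 1), ∏ i,
          (k - #(A (i + 1))).choose (l2 i) • blockWeight k x a0 a1 #(A i) (l2 i) := by
        refine sum_congr rfl fun A _ => ?_
        rw [← Fintype.prod_sum fun i (Q : Finset (Fin k)) =>
          if Disjoint Q (A (i + 1)) then blockWeight k x a0 a1 #(A i) #Q else 0]
        simp_rw [← sum_filter, sum_disjoint_eq_sum_choose]
        rw [Fintype.prod_sum]
    _ = ∑ l1 : Fin n → Fin (k + 1), (∏ i, (k.choose (l1 i) : R)) *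
          ∑ l2 : Fin n → Fin (k + 1),
            ∏ i, (k - l1 (i + 1)).choose (l2 i) • blockWeight k x a0 a1 (l1 i) (l2 i) :=
        sum_pi_finset_eq_sum_card fun c => ∑ l2 : Fin n → Fin (k + 1),
          ∏ i, (k - c (i + 1)).choose (l2 i) • blockWeight k x a0 a1 (c i) (l2 i)
    _ = _ := by
        simp_rw [mul_sum]
        refine sum_congr rfl fun l1 _ => sum_congr rfl fun l2 _ => ?_
        simp only [← prod_pow_eq_pow_sum, ← prod_mul_distrib]
        refine prod_congr rfl fun i _ => ?_
        simp only [nsmul_eq_mul, blockWeight, Nat.descFactorial_eq_factorial_mul_choose]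
        push_cast
        ring

theorem kroneckerMap_circulant_apply (a0 a1 : R) (a c : Fin n × Fin k) :
    ((a0 • (1 : Matrix (Fin n) (Fin n) R) + a1 • Pcirc R n) ⊗ₖ
        Matrix.of fun (_ : Fin k) (_ : Fin k) => (1 : R)) a c =
      (if c.1 = a.1 then a0 else 0) + (if c.1 = a.1 + 1 then a1 else 0) := by
  simp [Matrix.one_apply, Pcirc, eq_comm (a := a.1)]

theorem prod_choose_factorial_eq_zero_of_not_le {l1 l2 : Fin n → Fin (k + 1)}
    (h : ¬∀ i, (l2 i : ℕ) ≤ min (k - (l1 i : ℕ)) (k - (l1 (i + 1) : ℕ))) :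
    ∏ i, (k.choose (l1 i) : R) * ((k - l1 (i + 1)).choose (l2 i) : R) *
      (k.choose (l1 i + l2 i) : R) * ((l1 i + l2 i : ℕ).factorial : R) = 0 := by
  obtain ⟨i, hi⟩ := not_forall.1 h
  rw [not_le] at hi
  refine prod_eq_zero (mem_univ i) ?_
  rcases min_lt_iff.1 hi with hi | hi
  · rw [Nat.choose_eq_zero_of_lt (by omega : k < l1 i + l2 i)]
    simp
  · rw [Nat.choose_eq_zero_of_lt hi]
    simp

end BlockCirculant

theorem stmt2_general {R : Type*} [CommRing R] (n k : ℕ) [NeZero n] (a0 a1 x : R) :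
    rookPoly x ((a0 • (1 : Matrix (Fin n) (Fin n) R) + a1 • Pcirc R n) ⊗ₖ
        (Matrix.of fun (_ : Fin k) (_ : Fin k) => (1 : R))) =
      ∑ l : (Fin n → Fin (k + 1)) × (Fin n → Fin (k + 1)),
        if ∀ i : Fin n, (l.2 i : ℕ) ≤ min (k - (l.1 i : ℕ)) (k - (l.1 (i + 1) : ℕ)) then
          (∏ i : Fin n,
              (Nat.choose k (l.1 i : ℕ) : R) *
                (Nat.choose (k - (l.1 (i + 1) : ℕ)) (l.2 i : ℕ) : R) *
                (Nat.choose k ((l.1 i : ℕ) + (l.2 i : ℕ)) : R) *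
                (Nat.factorial ((l.1 i : ℕ) + (l.2 i : ℕ)) : R)) *
            a0 ^ (∑ i : Fin n, (l.1 i : ℕ)) * a1 ^ (∑ i : Fin n, (l.2 i : ℕ)) *
            x ^ (∑ i : Fin n, ((l.1 i : ℕ) + (l.2 i : ℕ)))
        else 0 := by
  rw [rookPoly_eq_sum_cards x a0 a1 _ (kroneckerMap_circulant_apply a0 a1),
    Fintype.sum_prod_type]
  refine sum_congr rfl fun l1 _ => sum_congr rfl fun l2 _ => ?_
  split_ifs with h
  · rfl
  · rw [prod_choose_factorial_eq_zero_of_not_le h, zero_mul, zero_mul, zero_mul]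

theorem stmt2 {R : Type*} [CommRing R] (n k : ℕ) [NeZero n] (hk : 1 ≤ k) (a0 a1 x : R) :
    rookPoly x ((a0 • (1 : Matrix (Fin n) (Fin n) R) + a1 • Pcirc R n) ⊗ₖ
        (Matrix.of fun (_ : Fin k) (_ : Fin k) => (1 : R))) =
      ∑ l : (Fin n → Fin (k + 1)) × (Fin n → Fin (k + 1)),
        if ∀ i : Fin n, (l.2 i : ℕ) ≤ min (k - (l.1 i : ℕ)) (k - (l.1 (i + 1) : ℕ)) then
          (∏ i : Fin n,
              (Nat.choose k (l.1 i : ℕ) : R) *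
                (Nat.choose (k - (l.1 (i + 1) : ℕ)) (l.2 i : ℕ) : R) *
                (Nat.choose k ((l.1 i : ℕ) + (l.2 i : ℕ)) : R) *
                (Nat.factorial ((l.1 i : ℕ) + (l.2 i : ℕ)) : R)) *
            a0 ^ (∑ i : Fin n, (l.1 i : ℕ)) * a1 ^ (∑ i : Fin n, (l.2 i : ℕ)) *
            x ^ (∑ i : Fin n, ((l.1 i : ℕ) + (l.2 i : ℕ)))
        else 0 :=
  stmt2_general n k a0 a1 x
end

section
/- Let K be a field of characteristic 0, let x_1, x_2, …, x_m be algebraically independent variables over K, and let E be an algebraic field extension of the rational function field K(x_1, x_2, …, x_m). Let D_{x_1}, D_{x_2}, …, D_{x_m} be derivations of E whose restrictions to K(x_1, x_2, …, x_m) are the partial derivatives ∂/∂x_1, ∂/∂x_2, …, ∂/∂x_m respectively. If y ∈ E satisfies D_{x_1}(y) = D_{x_2}(y) = … = D_{x_m}(y) = 0, then y is algebraic over K. -/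
/-!
Write `F = K(x₁, …, xₘ)` and let `p` be the minimal polynomial of `y` over `F`. The `D_j` map `F`
into itself, so applying `D_j` to the coefficients of `p` yields a polynomial over `F` of smaller
degree that vanishes at `y` (as `D_j y = 0`); hence every coefficient of `p` is a common constant
of the `D_j`. A common constant `c` of `F` lies in `K`: writing `c · Q(x) = P(x)` and differentiating
lowers the total degree of `Q` until `Q` is a nonzero constant, so `c = P(x)` is a polynomial in the
algebraically independent `xᵢ` with vanishing partial derivatives, which in characteristic `0` is a
constant. Thus `p` has coefficients in `K` and `y` is algebraic over `K`.
-/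

namespace MvPolynomial

variable {σ R : Type*} [CommSemiring R]

theorem totalDegree_pderiv_lt {j : σ} {Q : MvPolynomial σ R} (hQ : pderiv j Q ≠ 0) :
    (pderiv j Q).totalDegree < Q.totalDegree := by
  have hlt : ∀ m ∈ (pderiv j Q).support, m.degree < Q.totalDegree := fun m hm ↦
    calc m.degree < (m + Finsupp.single j 1).degree := by simp
      _ ≤ Q.totalDegree := by
        refine le_totalDegree (mem_support_iff.2 ?_)
        rw [mem_support_iff, coeff_pderiv] at hm
        exact left_ne_zero_of_mul hm
  obtain ⟨m, hm⟩ := support_nonempty.2 hQ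
  exact (Finset.sup_lt_iff ((Nat.zero_le _).trans_lt (hlt m hm))).2 hlt

theorem eq_C_of_forall_pderiv_eq_zero [NoZeroDivisors R] [CharZero R] {Q : MvPolynomial σ R}
    (h : ∀ j, pderiv j Q = 0) : Q = C (coeff 0 Q) := by
  classical
  ext m
  rw [coeff_C]
  split_ifs with hm
  · rw [hm]
  obtain ⟨j, hj⟩ := Finsupp.support_nonempty_iff.2 (Ne.symm hm)
  have hle : Finsupp.single j 1 ≤ m :=
    Finsupp.single_le_iff.2 (Nat.one_le_iff_ne_zero.2 (Finsupp.mem_support_iff.1 hj))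
  have hcoeff := coeff_pderiv (i := j) Q (m - Finsupp.single j 1)
  rw [h j, coeff_zero, tsub_add_cancel_of_le hle] at hcoeff
  exact (mul_eq_zero.1 hcoeff.symm).resolve_right (Nat.cast_add_one_ne_zero _)

end MvPolynomial

open MvPolynomial in
theorem Derivation.apply_aeval_eq_aeval_pderiv {σ R A : Type*} [DecidableEq σ] [CommRing R]
    [CommRing A] [Algebra R A] (D : Derivation ℤ A A) {x : σ → A} {j : σ}
    (hR : ∀ c : R, D (algebraMap R A c) = 0) (hx : ∀ i, D (x i) = if i = j then 1 else 0)
    (P : MvPolynomial σ R) : D (aeval x P) = aeval x (pderiv j P) := by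
  induction P using MvPolynomial.induction_on with
  | C c => simp [hR]
  | add P Q hP hQ => simp [hP, hQ]
  | mul_X P i hP =>
    rcases eq_or_ne i j with rfl | hij
    · simp [hP, hx, mul_comm, add_comm]
    · simp [hP, hx, hij, pderiv_X_of_ne hij]

section Constants

open MvPolynomial IntermediateField

variable {σ K E : Type*} [Field K] [Field E] [Algebra K E] {D : σ → Derivation ℤ E E}
  {x : σ → E}

theorem mem_range_aeval_of_mul_aeval_eq [CharZero K]
    (hD : ∀ j (P : MvPolynomial σ K), D j (aeval x P) = aeval x (pderiv j P)) {c : E}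
    (hc : ∀ j, D j c = 0) {P Q : MvPolynomial σ K} (hQ : Q ≠ 0)
    (h : c * aeval x Q = aeval x P) : c ∈ Set.range (aeval (R := K) x) := by
  induction hn : Q.totalDegree using Nat.strong_induction_on generalizing P Q with
  | _ n ih =>
  by_cases hconst : ∀ j, pderiv j Q = 0
  · rw [eq_C_of_forall_pderiv_eq_zero hconst, aeval_C] at h
    rw [eq_C_of_forall_pderiv_eq_zero hconst] at hQ
    have hq : algebraMap K E (coeff 0 Q) ≠ 0 := by simpa using hQ
    refine ⟨C (coeff 0 Q)⁻¹ * P, ?_⟩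
    rw [map_mul, aeval_C, ← h, map_inv₀]
    field_simp
  · obtain ⟨j, hj⟩ := not_forall.1 hconst
    refine ih _ (hn ▸ totalDegree_pderiv_lt hj) hj (P := pderiv j P) ?_ rfl
    simpa [hc, hD] using congrArg (D j) h

theorem aeval_mem_range_algebraMap_of_forall_apply_eq_zero [CharZero K]
    (hx : AlgebraicIndependent K x)
    (hD : ∀ j (P : MvPolynomial σ K), D j (aeval x P) = aeval x (pderiv j P))
    {P : MvPolynomial σ K} (hP : ∀ j, D j (aeval x P) = 0) :
    aeval x P ∈ Set.range (algebraMap K E) := by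
  have hconst : ∀ j, pderiv j P = 0 := fun j ↦ hx (by rw [← hD, hP, map_zero])
  rw [eq_C_of_forall_pderiv_eq_zero hconst, aeval_C]
  exact Set.mem_range_self _

theorem mem_range_algebraMap_of_forall_apply_eq_zero [CharZero K]
    (hx : AlgebraicIndependent K x)
    (hD : ∀ j (P : MvPolynomial σ K), D j (aeval x P) = aeval x (pderiv j P)) {z : E}
    (hz : z ∈ adjoin K (Set.range x)) (hc : ∀ j, D j z = 0) :
    z ∈ Set.range (algebraMap K E) := by
  obtain ⟨r, s, rfl⟩ := (mem_adjoin_range_iff K x z).1 hz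
  by_cases hs : aeval x s = 0
  · rw [hs, div_zero]
    exact ⟨0, map_zero _⟩
  obtain ⟨P, hP⟩ := mem_range_aeval_of_mul_aeval_eq hD hc (P := r) (Q := s)
    (by rintro rfl; simp at hs) (div_mul_cancel₀ _ hs)
  rw [← hP] at hc ⊢
  exact aeval_mem_range_algebraMap_of_forall_apply_eq_zero hx hD hc

theorem apply_mem_adjoin_range
    (hD : ∀ j (P : MvPolynomial σ K), D j (aeval x P) = aeval x (pderiv j P)) {z : E}
    (hz : z ∈ adjoin K (Set.range x)) (j : σ) : D j z ∈ adjoin K (Set.range x) := by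
  have haeval (P : MvPolynomial σ K) : aeval x P ∈ adjoin K (Set.range x) :=
    (mem_adjoin_range_iff K x _).2 ⟨P, 1, by simp⟩
  obtain ⟨r, s, rfl⟩ := (mem_adjoin_range_iff K x z).1 hz
  rw [Derivation.leibniz_div, hD, hD]
  simp only [smul_eq_mul]
  exact mul_mem (pow_mem (inv_mem (haeval s)) 2)
    (sub_mem (mul_mem (haeval s) (haeval _)) (mul_mem (haeval r) (haeval _)))

end Constants

section MinimalPolynomial

open Polynomial

theorem Derivation.apply_coeff_minpoly_eq_zero {F A : Type*} [Field F] [CommRing A]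
    [Algebra F A] (D : Derivation ℤ A A)
    (hD : ∀ a : F, D (algebraMap F A a) ∈ Set.range (algebraMap F A)) {y : A} (hy : D y = 0)
    (i : ℕ) : D (algebraMap F A ((minpoly F y).coeff i)) = 0 := by
  by_cases hint : IsIntegral F y
  swap
  · simp [minpoly.eq_zero hint]
  choose d hd using hD
  set p := minpoly F y
  set n := p.natDegree
  have hmonic : p.Monic := minpoly.monic hint
  have hsum : ∑ k : Fin n, d (p.coeff k) • y ^ (k : ℕ) = 0 := by
    rw [Fin.sum_univ_eq_sum_range (fun k ↦ d (p.coeff k) • y ^ k)]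
    have h := congrArg D (minpoly.aeval F y)
    rw [aeval_eq_sum_range, map_sum, Finset.sum_range_succ, hmonic.coeff_natDegree] at h
    simpa [Algebra.smul_def, Derivation.leibniz, Derivation.leibniz_pow, hy, hd, mul_comm] using h
  rcases lt_trichotomy i n with hi | rfl | hi
  · rw [← hd, Fintype.linearIndependent_iff.1 (linearIndependent_pow y) _ hsum ⟨i, hi⟩,
      map_zero]
  · rw [hmonic.coeff_natDegree, map_one, D.map_one_eq_zero]
  · rw [coeff_eq_zero_of_natDegree_lt hi, map_zero, D.map_zero]

theorem isIntegral_of_minpoly_mem_lifts {K F A : Type*} [CommRing K] [Field F] [CommRing A]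
    [Algebra K F] [Algebra F A] [Algebra K A] [IsScalarTower K F A] {y : A}
    (hy : IsIntegral F y) (h : minpoly F y ∈ lifts (algebraMap K F)) : IsIntegral K y := by
  obtain ⟨q, hq, -, hmonic⟩ := lifts_and_natDegree_eq_and_monic h (minpoly.monic hy)
  exact ⟨q, hmonic, by rw [← aeval_def, ← aeval_map_algebraMap F, hq, minpoly.aeval]⟩

end MinimalPolynomial

theorem stmt10 (K : Type*) [Field K] [CharZero K] (m : ℕ)
    (E : Type*) [Field E] [Algebra K E]
    (x : Fin m → E) (hx : AlgebraicIndependent K x)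
    (halg : Algebra.IsAlgebraic (IntermediateField.adjoin K (Set.range x)) E)
    (D : Fin m → Derivation ℤ E E)
    (hDK : ∀ j, ∀ c : K, D j (algebraMap K E c) = 0)
    (hDx : ∀ j i, D j (x i) = if i = j then 1 else 0)
    (y : E) (hy : ∀ j, D j y = 0) :
    IsAlgebraic K y := by
  set F := IntermediateField.adjoin K (Set.range x)
  have hD (j) (P : MvPolynomial (Fin m) K) :
      D j (MvPolynomial.aeval x P) = MvPolynomial.aeval x (MvPolynomial.pderiv j P) :=
    (D j).apply_aeval_eq_aeval_pderiv (hDK j) (hDx j) P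
  have hDF (j) (a : F) : D j a ∈ Set.range (algebraMap F E) :=
    ⟨⟨_, apply_mem_adjoin_range hD a.2 j⟩, rfl⟩
  have hlifts : minpoly F y ∈ Polynomial.lifts (algebraMap K F) := by
    refine (Polynomial.lifts_iff_coeff_lifts _).2 fun i ↦ ?_
    obtain ⟨k, hk⟩ := mem_range_algebraMap_of_forall_apply_eq_zero hx hD
      ((minpoly F y).coeff i).2 fun j ↦ (D j).apply_coeff_minpoly_eq_zero (hDF j) (hy j) i
    exact ⟨k, Subtype.ext hk⟩
  exact (isIntegral_of_minpoly_mem_lifts (halg.isIntegral.isIntegral y) hlifts).isAlgebraic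
end

section
/- Let K be a field of characteristic 0, let m ≥ 2, and let f(x_1,…,x_m) = Σ a_{i_1,…,i_m} x_1^{i_1}⋯x_m^{i_m} be a formal power series in m variables over K with ∂f/∂x_1 = ∂f/∂x_2 = … = ∂f/∂x_m. Then for all exponents: a_{i_1,i_2,…,i_m} = ((i_1+i_2+⋯+i_m)! / (i_1! i_2! ⋯ i_m!)) · a_{0,0,…,0, i_1+i_2+⋯+i_m}, and consequently a_{i_1,…,i_m} = a_{i_{σ(1)},…,i_{σ(m)}} for every permutation σ of {1,…,m}. -/
/-!
The hypothesis says that `b e := (∏ i, (e i)!) * coeff e f` takes the same value at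
`e + single j 1` for every `j`. Moving one unit of exponent at a time, `b` is therefore constant
on each total degree, so `d! * a_d = |d|! * a_{|d| ε_m}`. The right-hand side of the resulting
formula `a_d = multinomial d * a_{|d| ε_m}` is symmetric in the entries of `d`.
-/

open Finsupp Nat

namespace Finsupp

theorem exists_eq_add_single_one {σ : Type*} {e : σ →₀ ℕ} (he : e ≠ 0) :
    ∃ a j, e = a + single j 1 := by
  obtain ⟨j, hj⟩ := Finsupp.ne_iff.mp he
  refine ⟨e - single j 1, j, (tsub_add_cancel_of_le ?_).symm⟩
  exact single_le_iff.mpr (Nat.one_le_iff_ne_zero.mpr hj)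

theorem apply_eq_of_degree_eq {σ α : Type*} {g : (σ →₀ ℕ) → α}
    (hg : ∀ e i j, g (e + single i 1) = g (e + single j 1)) {e e' : σ →₀ ℕ}
    (h : e.degree = e'.degree) : g e = g e' := by
  induction hn : e.degree generalizing g e e' with
  | zero => rw [(degree_eq_zero_iff e).mp hn, (degree_eq_zero_iff e').mp (h ▸ hn)]
  | succ n ih =>
    obtain ⟨a, i, rfl⟩ := exists_eq_add_single_one (e := e) (by rintro rfl; simp at hn)
    obtain ⟨a', j, rfl⟩ := exists_eq_add_single_one (e := e') (by rintro rfl; simp_all)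
    simp only [map_add, degree_single] at h hn
    calc g (a + single i 1) = g (a' + single i 1) := by
          refine ih (g := fun b ↦ g (b + single i 1)) (fun b k l ↦ ?_) (by omega) (by omega)
          rw [add_right_comm, hg _ k l, add_right_comm]
      _ = g (a' + single j 1) := hg a' i j

theorem prod_factorial_add_single {σ : Type*} [Fintype σ] (e : σ →₀ ℕ) (j : σ) :
    ∏ i, ((e + single j 1 : σ →₀ ℕ) i)! = (e j + 1) * ∏ i, (e i)! := by
  classical
  rw [Fintype.prod_eq_mul_prod_compl j, Fintype.prod_eq_mul_prod_compl j (fun i ↦ (e i)!),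
    ← mul_assoc]
  congr 1
  · simp [Nat.factorial_succ]
  · refine Finset.prod_congr rfl fun i hi ↦ ?_
    simp [single_eq_of_ne (by simpa using hi : i ≠ j)]

end Finsupp

theorem Nat.multinomial_univ_comp_equiv {α β : Type*} [Fintype α] [Fintype β] (f : α → ℕ)
    (e : β ≃ α) : multinomial .univ (f ∘ e) = multinomial .univ f := by
  simp only [multinomial, Function.comp_apply, Equiv.sum_comp, Equiv.prod_comp e (fun i ↦ (f i)!)]

theorem MvPowerSeries.coeff_eq_multinomial_mul_coeff_single {σ K : Type*} [Fintype σ]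
    [CommRing K] [IsDomain K] [CharZero K] {f : MvPowerSeries σ K}
    (hf : ∀ j j' : σ, ∀ d : σ →₀ ℕ,
      ((d j + 1 : ℕ) : K) * coeff (d + single j 1) f =
        ((d j' + 1 : ℕ) : K) * coeff (d + single j' 1) f)
    (d : σ →₀ ℕ) (j : σ) :
    coeff d f = multinomial .univ (fun i ↦ d i) * coeff (single j (∑ i, d i)) f := by
  set g : (σ →₀ ℕ) → K := fun e ↦ ((∏ i, (e i)! : ℕ) : K) * coeff e f
  have hg : ∀ e i i', g (e + single i 1) = g (e + single i' 1) := by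
    intro e i i'
    simp only [g, prod_factorial_add_single, Nat.cast_mul, mul_comm _ ((∏ i, (e i)! : ℕ) : K),
      mul_assoc, hf i i' e]
  have hg_single :
      g (single j (∑ i, d i)) = ((∑ i, d i)! : K) * coeff (single j (∑ i, d i)) f := by
    simp only [g]
    rw [Fintype.prod_eq_single j fun i hi ↦ by rw [single_eq_of_ne hi, factorial_zero],
      single_eq_same]
  have hd_ne : ((∏ i, (d i)! : ℕ) : K) ≠ 0 :=
    Nat.cast_ne_zero.mpr (Finset.prod_ne_zero_iff.mpr fun i _ ↦ factorial_ne_zero _)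
  apply mul_left_cancel₀ hd_ne
  calc ((∏ i, (d i)! : ℕ) : K) * coeff d f = g (single j (∑ i, d i)) :=
        apply_eq_of_degree_eq hg (by simp [degree_eq_sum])
    _ = _ := by rw [hg_single, ← mul_assoc, ← Nat.cast_mul, multinomial_spec]

theorem stmt12 (K : Type*) [Field K] [CharZero K] (m : ℕ) (hm : 2 ≤ m)
    (f : MvPowerSeries (Fin m) K)
    (hf : ∀ j j' : Fin m, ∀ d : Fin m →₀ ℕ,
      ((d j + 1 : ℕ) : K) * MvPowerSeries.coeff (d + Finsupp.single j 1) f =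
        ((d j' + 1 : ℕ) : K) * MvPowerSeries.coeff (d + Finsupp.single j' 1) f)
    (d : Fin m →₀ ℕ) :
    MvPowerSeries.coeff d f =
        (Nat.multinomial Finset.univ (fun i => d i) : K) *
          MvPowerSeries.coeff
            (Finsupp.single (⟨m - 1, by omega⟩ : Fin m) (∑ i, d i)) f ∧
      ∀ σ : Equiv.Perm (Fin m),
        MvPowerSeries.coeff d f =
          MvPowerSeries.coeff (Finsupp.equivMapDomain σ d) f := by
  have key := fun e ↦ MvPowerSeries.coeff_eq_multinomial_mul_coeff_single hf e ⟨m - 1, by omega⟩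
  refine ⟨key d, fun σ ↦ ?_⟩
  have hcomp : ⇑(equivMapDomain σ d) = d ∘ σ.symm := funext (equivMapDomain_apply σ d)
  rw [key d, key (equivMapDomain σ d), hcomp, multinomial_univ_comp_equiv, Function.comp_def,
    Equiv.sum_comp σ.symm (fun i ↦ d i)]
end

section
/- Let k ≥ 1, t ≥ 1 and n ≥ 1, let 0 ≤ r ≤ kt, and let a_0, a_1, …, a_t, x be independent variables over a field of characteristic 0. Then Tr( (Π_{r,t}^{[k]}(a_0, a_1·x, a_2·x^2, …, a_t·x^t))^n ) = x^{rn} · Tr( (Π_{r,t}^{[k]}(a_0, a_1, …, a_t))^n ). -/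
/-!
Conjugate by the diagonal matrix `D = diag(x ^ w(α))`, where `w(l_1, …, l_t) = ∑ (t - i) l_i`.
Every monomial of the `(α, β)` entry of `Π(a_0, a_1 x, …, a_t x^t)` carries the power
`x ^ (r + w(β) - w(α))`, so `D · Π(a_0, a_1 x, …, a_t x^t) = x^r Π(a_0, …, a_t) · D`.
Raising this to the `n`-th power and cancelling `x ^ w(α)` from the `(α, α)` entries (`x` is a
non-zero-divisor) gives `Π(a_0, a_1 x, …)^n α α = x^(rn) Π(a_0, …)^n α α`; sum over `α`.
-/

open scoped BigOperators Classical

/-- The index set `G_{r,t}^{[k]}`: vectors `(l_1, …, l_t)` with `0 ≤ l_i ≤ k` and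
`l_1 + ⋯ + l_t = r`. -/
def GIdx (k r t : ℕ) := {l : Fin t → Fin (k + 1) // (∑ i, (l i : ℕ)) = r}

noncomputable instance (k r t : ℕ) : Fintype (GIdx k r t) := by
  unfold GIdx; infer_instance

instance (k r t : ℕ) : DecidableEq (GIdx k r t) := by
  unfold GIdx; infer_instance

/-- The square matrix `Π_{r,t}^{[k]}(a_0, a_1, …, a_t)`, with rows and columns indexed by
`G_{r,t}^{[k]}`.  For `t ≥ 1` the `(α,β)` entry, for `α = (l_1, …, l_t)`, equals
`k!·C(k, l_t+p_1+⋯+p_{t−1})·C(l_1,p_1)⋯C(l_{t−1},p_{t−1})·a_0^{k−l_t−Σp}·a_1^{p_1}⋯a_{t−1}^{p_{t−1}}·a_t^{l_t}`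
if `β = (l_t+p_1+⋯+p_{t−1}, l_1−p_1, …, l_{t−1}−p_{t−1})` for (necessarily unique) integers
`0 ≤ p_i ≤ l_i` with `p_1+⋯+p_{t−1} ≤ k−l_t`, and `0` otherwise; `Π_{0,0}^{[k]}(a_0) = k!·a_0^k`. -/
noncomputable def PiMat {R : Type*} [CommRing R] (k t r : ℕ) (a : ℕ → R) :
    Matrix (GIdx k r t) (GIdx k r t) R :=
  Matrix.of fun α β =>
    if ht : 0 < t then
      ∑ p : Fin t → Fin (k + 1),
        if (∀ i : Fin t, i.val + 1 < t → (p i : ℕ) ≤ (α.1 i : ℕ)) ∧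
            (∀ i : Fin t, ¬ i.val + 1 < t → (p i : ℕ) = 0) ∧
            (α.1 ⟨t - 1, Nat.sub_lt ht one_pos⟩ : ℕ) + (∑ i, (p i : ℕ)) ≤ k ∧
            (β.1 ⟨0, ht⟩ : ℕ) = (α.1 ⟨t - 1, Nat.sub_lt ht one_pos⟩ : ℕ) + ∑ i, (p i : ℕ) ∧
            (∀ j : Fin t, 0 < j.val →
              (β.1 j : ℕ) =
                (α.1 ⟨j.val - 1, lt_of_le_of_lt (Nat.pred_le _) j.isLt⟩ : ℕ) -
                  (p ⟨j.val - 1, lt_of_le_of_lt (Nat.pred_le _) j.isLt⟩ : ℕ)) then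
          (Nat.factorial k : R) *
            (Nat.choose k ((α.1 ⟨t - 1, Nat.sub_lt ht one_pos⟩ : ℕ) + ∑ i, (p i : ℕ)) : R) *
            (∏ i : Fin t, if i.val + 1 < t then (Nat.choose (α.1 i : ℕ) (p i : ℕ) : R) else 1) *
            a 0 ^ (k - (α.1 ⟨t - 1, Nat.sub_lt ht one_pos⟩ : ℕ) - ∑ i, (p i : ℕ)) *
            (∏ i : Fin t, if i.val + 1 < t then a (i.val + 1) ^ (p i : ℕ) else 1) *
            a t ^ (α.1 ⟨t - 1, Nat.sub_lt ht one_pos⟩ : ℕ)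
        else 0
    else (Nat.factorial k : R) * a 0 ^ k

namespace GIdx

variable {k r t : ℕ}

def weight (α : GIdx k r t) : ℕ := ∑ i : Fin t, (t - 1 - i.val) * (α.1 i : ℕ)

lemma weight_eq_sum_castSucc (α : GIdx k r (t + 1)) :
    α.weight = ∑ i : Fin t, (t - i.val) * (α.1 i.castSucc : ℕ) := by
  simp [weight, Fin.sum_univ_castSucc]

lemma weight_eq_add_sum_succ (α : GIdx k r (t + 1)) :
    α.weight = t * (α.1 0 : ℕ) + ∑ i : Fin t, (t - 1 - i.val) * (α.1 i.succ : ℕ) := by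
  simp only [weight, Fin.sum_univ_succ, Fin.val_zero, Fin.val_succ, Nat.sub_zero,
    Nat.add_sub_cancel, Nat.sub_sub, Nat.add_comm 1]

lemma sum_castSucc_add_last (α : GIdx k r (t + 1)) :
    ∑ i : Fin t, (α.1 i.castSucc : ℕ) + α.1 (Fin.last t) = r := by
  rw [← Fin.sum_univ_castSucc (fun i => (α.1 i : ℕ)), α.2]

/-- The power of `x` carried by the `p`-term of the `(α, β)` entry of `Π(a_0, a_1 x, …, a_t x^t)`
is `r + weight β - weight α`. -/
lemma weight_add_exponent {α β : GIdx k r (t + 1)} {p : Fin (t + 1) → Fin (k + 1)}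
    (hle : ∀ i : Fin t, (p i.castSucc : ℕ) ≤ α.1 i.castSucc)
    (hlast : (p (Fin.last t) : ℕ) = 0)
    (hfirst : (β.1 0 : ℕ) = α.1 (Fin.last t) + ∑ i, (p i : ℕ))
    (hshift : ∀ i : Fin t, (β.1 i.succ : ℕ) = α.1 i.castSucc - p i.castSucc) :
    α.weight + (∑ i : Fin (t + 1), (i.val + 1) * (p i : ℕ) + (t + 1) * α.1 (Fin.last t))
      = r + β.weight := by
  have hterm : ∀ i : Fin t,
      (t - i.val) * (α.1 i.castSucc : ℕ) + (i.val + 1) * p i.castSucc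
        = α.1 i.castSucc + (t * p i.castSucc
            + (t - 1 - i.val) * (α.1 i.castSucc - p i.castSucc)) := by
    intro i
    have hi := i.isLt
    zify [hle i, hi.le, (by omega : i.val ≤ t - 1), (by omega : 1 ≤ t)]
    ring
  have hsum := Finset.sum_congr rfl fun i (_ : i ∈ Finset.univ) => hterm i
  simp only [Finset.sum_add_distrib, ← Finset.mul_sum] at hsum
  have hr := sum_castSucc_add_last α
  rw [weight_eq_sum_castSucc, weight_eq_add_sum_succ, hfirst,
    Fin.sum_univ_castSucc, Fin.sum_univ_castSucc (fun i => (p i : ℕ)), hlast]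
  simp only [hshift, Fin.val_castSucc, Fin.val_last]
  linarith

end GIdx

section Scaling

variable {R : Type*} [CommRing R] {k r t : ℕ}

open GIdx

lemma pow_weight_mul_PiMat_apply (b : ℕ → R) (x : R) (α β : GIdx k r t) :
    x ^ α.weight * PiMat k t r (fun i => b i * x ^ i) α β
      = x ^ (r + β.weight) * PiMat k t r b α β := by
  cases t with
  | zero =>
    obtain rfl : r = 0 := by simpa using α.2.symm
    simp [PiMat, weight]
  | succ t =>
    simp only [PiMat, Matrix.of_apply, dif_pos t.succ_pos, Finset.mul_sum]
    refine Finset.sum_congr rfl fun p _ => ?_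
    split_ifs with h
    · obtain ⟨hle, hzero, -, hfirst, hshift⟩ := h
      have hprod : (∏ i : Fin (t + 1), if i.val + 1 < t + 1 then
            (b (i.val + 1) * x ^ (i.val + 1)) ^ (p i : ℕ) else 1)
          = (∏ i : Fin (t + 1), if i.val + 1 < t + 1 then b (i.val + 1) ^ (p i : ℕ) else 1)
            * x ^ (∑ i : Fin (t + 1), (i.val + 1) * (p i : ℕ)) := by
        rw [← Finset.prod_pow_eq_pow_sum, ← Finset.prod_mul_distrib]
        refine Finset.prod_congr rfl fun i _ => ?_
        split_ifs with hi
        · rw [mul_pow, ← pow_mul]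
        · simp [hzero i hi]
      have hexp := weight_add_exponent (α := α) (β := β) (p := p)
        (fun i => hle i.castSucc (by simp)) (hzero _ (by simp)) hfirst
        (fun i => hshift i.succ i.succ_pos)
      have hlast : (⟨t + 1 - 1, by omega⟩ : Fin (t + 1)) = Fin.last t := Fin.ext (by simp)
      rw [hprod, hlast, ← hexp]
      simp only [mul_pow, ← pow_mul, pow_zero, mul_one, pow_add]
      ring
    · simp

lemma semiconjBy_diagonal_PiMat (b : ℕ → R) (x : R) :
    SemiconjBy (Matrix.diagonal fun α : GIdx k r t => x ^ α.weight)
      (PiMat k t r fun i => b i * x ^ i) (x ^ r • PiMat k t r b) := by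
  ext α β
  simp only [Matrix.diagonal_mul, Matrix.mul_diagonal, Matrix.smul_apply,
    smul_eq_mul, pow_weight_mul_PiMat_apply, pow_add]
  ring

lemma PiMat_pow_apply_self {x : R} (hx : IsLeftRegular x) (b : ℕ → R) (n : ℕ)
    (α : GIdx k r t) :
    (PiMat k t r (fun i => b i * x ^ i) ^ n) α α = x ^ (r * n) * (PiMat k t r b ^ n) α α := by
  have h := congrFun (congrFun ((semiconjBy_diagonal_PiMat b x).pow_right n) α) α
  simp only [Matrix.diagonal_mul, Matrix.mul_diagonal, smul_pow, Matrix.smul_apply,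
    smul_eq_mul, ← pow_mul] at h
  exact hx.pow α.weight (h.trans (mul_comm _ _))

theorem trace_PiMat_pow {x : R} (hx : IsLeftRegular x) (b : ℕ → R) (n : ℕ) :
    (PiMat k t r (fun i => b i * x ^ i) ^ n).trace = x ^ (r * n) * (PiMat k t r b ^ n).trace := by
  simp only [Matrix.trace, Matrix.diag, PiMat_pow_apply_self hx, Finset.mul_sum]

end Scaling

theorem stmt13 (F : Type*) [Field F] (k t r n : ℕ) :
    Matrix.trace
        ((PiMat k t r (fun i =>
          (if h : i ≤ t then
              (MvPolynomial.X (⟨i, by omega⟩ : Fin (t + 2)) : MvPolynomial (Fin (t + 2)) F)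
            else 0) *
            MvPolynomial.X (⟨t + 1, by omega⟩ : Fin (t + 2)) ^ i)) ^ n) =
      MvPolynomial.X (⟨t + 1, by omega⟩ : Fin (t + 2)) ^ (r * n) *
        Matrix.trace
          ((PiMat k t r (fun i =>
            if h : i ≤ t then
                (MvPolynomial.X (⟨i, by omega⟩ : Fin (t + 2)) : MvPolynomial (Fin (t + 2)) F)
              else 0)) ^ n) :=
  trace_PiMat_pow (MvPolynomial.isRegular_X (R := F)).left _ n
end

section
/- Let k ≥ 1 and t ≥ 1, let 0 ≤ r ≤ kt, and let a_0, a_1, …, a_t be elements of a commutative ring with unity. Then det( x·I_{|G_{r,t}^{[k]}|} − Π_{r,t}^{[k]}(a_0, a_1, …, a_t) ) = det( x·I_{|G_{kt−r,t}^{[k]}|} − Π_{kt−r,t}^{[k]}(a_t, a_{t−1}, …, a_0) ), as polynomials in x. -/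
open scoped BigOperators Classical

/-!
Put `w(γ) = ∏ᵢ γᵢ! (k - γᵢ)!` and `γ* = (k - γ_t, …, k - γ_1)`, a bijection
`G_{r,t} ≃ G_{kt-r,t}`. Reversing the summation index `p` that links a row `α` to a column `β`
of `Π = Π_{r,t}(a_0, …, a_t)` gives the index linking `β*` to `α*` in
`Π' = Π_{kt-r,t}(a_t, …, a_0)`, with the same monomial in the `aᵢ`, and comparing binomial
coefficients gives `w(α) Π'_{β*,α*} = Π_{α,β} w(β)`. Thus `Π · diag w = diag w · Π''`, where `Π''`
is the transpose of `Π'` reindexed along `*`. Over a domain of characteristic zero `det (diag w)`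
cancels from the characteristic polynomials; the general case specialises the universal
coefficients in `ℤ[a_0, a_1, …]`.
-/

open Finset Matrix Polynomial
open scoped Nat

theorem Matrix.charpoly_eq_of_mul_diagonal_eq_diagonal_mul {R : Type*} [CommRing R] [IsDomain R]
    {m n : Type*} [Fintype m] [DecidableEq m] [Fintype n] [DecidableEq n]
    (A : Matrix m m R) (B : Matrix n n R) (e : m ≃ n) (w : m → R) (hw : ∀ i, w i ≠ 0)
    (h : A * diagonal w = diagonal w * (B.submatrix e e)ᵀ) : A.charpoly = B.charpoly := by
  have hB : (B.submatrix e e)ᵀ.charpoly = B.charpoly := by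
    rw [charpoly_transpose]
    exact charpoly_reindex e.symm B
  have hcomm : charmatrix A * diagonal (C ∘ w) =
      diagonal (C ∘ w) * charmatrix (B.submatrix e e)ᵀ := by
    ext i j : 1
    have hij := congrArg C (congrFun₂ h i j)
    simp only [mul_diagonal, diagonal_mul, map_mul] at hij
    by_cases hij' : i = j
    · subst hij'
      simp only [mul_diagonal, diagonal_mul, charmatrix_apply_eq, Function.comp_apply]
      linear_combination -hij
    · simp only [mul_diagonal, diagonal_mul, charmatrix_apply_ne _ _ _ hij',
        Function.comp_apply]
      linear_combination -hij
  have hdet : (diagonal (C ∘ w)).det ≠ 0 := by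
    rw [det_diagonal]
    exact prod_ne_zero_iff.2 fun i _ => C_ne_zero.2 (hw i)
  have := congrArg det hcomm
  rw [det_mul, det_mul, mul_comm] at this
  rw [← hB]
  exact mul_left_cancel₀ hdet this

theorem Matrix.det_X_smul_one_sub_map_C {R : Type*} [CommRing R] {n : Type*} [Fintype n]
    [DecidableEq n] (M : Matrix n n R) :
    ((X : R[X]) • (1 : Matrix n n R[X]) - M.map C).det = M.charpoly := by
  congr 1
  ext i j : 1
  by_cases hij : i = j <;> simp [hij]

section ComplRev

variable {k t : ℕ}

@[to_additive]
lemma Fin.prod_univ_comp_rev {M : Type*} [CommMonoid M] (f : Fin t → M) :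
    ∏ i : Fin t, f i.rev = ∏ i, f i :=
  Fintype.prod_equiv Fin.revPerm _ _ fun _ => rfl

/-- `Fin.rev` on `Fin (k + 1)` is `x ↦ k - x`, so this is `(k - γ_t, …, k - γ_1)`. -/
def complRev (γ : Fin t → Fin (k + 1)) : Fin t → Fin (k + 1) := fun i => (γ i.rev).rev

@[simp] lemma complRev_apply (γ : Fin t → Fin (k + 1)) (i : Fin t) :
    complRev γ i = (γ i.rev).rev := rfl

@[simp] lemma complRev_complRev (γ : Fin t → Fin (k + 1)) : complRev (complRev γ) = γ := by
  funext i
  simp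

lemma sum_complRev (γ : Fin t → Fin (k + 1)) :
    ∑ i, (complRev γ i : ℕ) = k * t - ∑ i, (γ i : ℕ) := by
  have hsum : ∑ i, (complRev γ i : ℕ) + ∑ i, (γ i : ℕ) = k * t := by
    simp only [complRev_apply, Fin.val_rev]
    rw [Fin.sum_univ_comp_rev fun i => k + 1 - ((γ i : ℕ) + 1), ← sum_add_distrib]
    trans ∑ _i : Fin t, k
    · exact sum_congr rfl fun i _ => by have := (γ i).is_le; omega
    · simp [mul_comm]
  omega

def GIdx.complRevEquiv {r : ℕ} (hr : r ≤ k * t) : GIdx k r t ≃ GIdx k (k * t - r) t where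
  toFun γ := ⟨complRev γ.1, by rw [sum_complRev, γ.2]⟩
  invFun γ := ⟨complRev γ.1, by rw [sum_complRev, γ.2]; omega⟩
  left_inv γ := Subtype.ext (complRev_complRev γ.1)
  right_inv γ := Subtype.ext (complRev_complRev γ.1)

def idxWeight (k : ℕ) (γ : Fin t → Fin (k + 1)) : ℕ := ∏ i, (γ i : ℕ)! * (k - γ i)!

lemma idxWeight_pos (γ : Fin t → Fin (k + 1)) : 0 < idxWeight k γ := by
  unfold idxWeight
  positivity

end ComplRev

lemma Nat.factorial_mul_factorial_mul_choose_sub {a q k : ℕ} (hq : q ≤ a) (ha : a ≤ k) :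
    a ! * (k - a)! * (k - (a - q)).choose q = a.choose q * ((a - q)! * (k - (a - q))!) := by
  refine Nat.eq_of_mul_eq_mul_right q.factorial_pos ?_
  have h₁ := Nat.choose_mul_factorial_mul_factorial (show q ≤ k - (a - q) by omega)
  have h₂ := Nat.choose_mul_factorial_mul_factorial hq
  rw [show k - (a - q) - q = k - a by omega] at h₁
  calc a ! * (k - a)! * (k - (a - q)).choose q * q !
      = a ! * ((k - (a - q)).choose q * q ! * (k - a)!) := by ring
    _ = a.choose q * q ! * (a - q)! * (k - (a - q))! := by rw [h₁, h₂]
    _ = a.choose q * ((a - q)! * (k - (a - q))!) * q ! := by ring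

namespace PiMat

variable {k s : ℕ}

/-- For `t = s + 1`, the condition in an entry of `PiMat`, with the summation index `p` cut
down to its first `s` coordinates `q` (its last one is forced to vanish). -/
def EntryCond (l b : Fin (s + 1) → Fin (k + 1)) (q : Fin s → Fin (k + 1)) : Prop :=
  (∀ i, (q i : ℕ) ≤ l i.castSucc) ∧ (l (Fin.last s) : ℕ) + ∑ i, (q i : ℕ) ≤ k ∧
    (b 0 : ℕ) = l (Fin.last s) + ∑ i, (q i : ℕ) ∧
    ∀ i, (b i.succ : ℕ) = l i.castSucc - q i

def entryCoeff (l : Fin (s + 1) → Fin (k + 1)) (q : Fin s → Fin (k + 1)) : ℕ :=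
  k ! * k.choose (l (Fin.last s) + ∑ i, (q i : ℕ)) * ∏ i, (l i.castSucc : ℕ).choose (q i)

def entryMonomial {R : Type*} [CommRing R] (a : ℕ → R) (l : Fin (s + 1) → Fin (k + 1))
    (q : Fin s → Fin (k + 1)) : R :=
  a 0 ^ (k - l (Fin.last s) - ∑ i, (q i : ℕ)) * (∏ i : Fin s, a (i + 1) ^ (q i : ℕ)) *
    a (s + 1) ^ (l (Fin.last s) : ℕ)

noncomputable def entry {R : Type*} [CommRing R] (a : ℕ → R)
    (l b : Fin (s + 1) → Fin (k + 1)) : R :=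
  ∑ q, if EntryCond l b q then (entryCoeff l q : R) * entryMonomial a l q else 0

lemma succ_apply {R : Type*} [CommRing R] {r : ℕ} (a : ℕ → R) (α β : GIdx k r (s + 1)) :
    PiMat k (s + 1) r a α β = entry a α.1 β.1 := by
  rw [PiMat, of_apply, dif_pos s.succ_pos, ← (Fin.snocEquiv fun _ => Fin (k + 1)).sum_comp,
    Fintype.sum_prod_type, Fintype.sum_eq_single 0, entry]
  · refine sum_congr rfl fun q _ => ?_
    have hlast : (⟨s + 1 - 1, Nat.sub_lt s.succ_pos one_pos⟩ : Fin (s + 1)) = Fin.last s :=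
      Fin.ext (by simp)
    simp only [Fin.snocEquiv_apply, hlast, Fin.sum_univ_castSucc, Fin.snoc_castSucc,
      Fin.snoc_last, Fin.val_zero, add_zero]
    congr 1
    · apply propext
      have hcast (i : Fin s) : (⟨i, by omega⟩ : Fin (s + 1)) = i.castSucc := rfl
      constructor
      · rintro ⟨hle, -, hsum, h0, hsucc⟩
        refine ⟨fun i => by simpa using hle i.castSucc (by simp), hsum, by simpa using h0,
          fun i => by simpa [hcast] using hsucc i.succ (by simp)⟩
      · rintro ⟨hle, hsum, h0, hsucc⟩
        refine ⟨Fin.lastCases (by simp) fun i _ => by simpa using hle i,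
          Fin.lastCases (by simp) fun i hi => (hi (by simp)).elim, hsum, by simpa using h0,
          Fin.cases (by simp) fun i _ => by simpa [hcast] using hsucc i⟩
    · simp [Fin.prod_univ_castSucc, entryCoeff, entryMonomial]
      ring
  · intro x hx
    refine sum_eq_zero fun q _ => if_neg ?_
    simp only [Fin.snocEquiv_apply]
    rintro ⟨-, hlast, -⟩
    exact hx (Fin.ext (by simpa using hlast (Fin.last s) (by simp)))

section

variable {l b : Fin (s + 1) → Fin (k + 1)} {q : Fin s → Fin (k + 1)}

lemma EntryCond.complRev (h : EntryCond l b q) :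
    EntryCond (complRev b) (complRev l) (q ∘ Fin.rev) := by
  obtain ⟨hle, hsum, h0, hsucc⟩ := h
  simp only [EntryCond, complRev_apply, Function.comp_apply, Fin.rev_castSucc, Fin.rev_succ,
    Fin.rev_last, Fin.rev_zero, Fin.val_rev, Fin.sum_univ_comp_rev fun i => (q i : ℕ)]
  refine ⟨fun i => ?_, by omega, by omega, fun i => ?_⟩
  · have := hle i.rev; have := hsucc i.rev; omega
  · have := hle i.rev; have := hsucc i.rev; have := (l (Fin.castSucc i.rev)).is_le; omega

lemma entryCond_complRev_iff :
    EntryCond (complRev b) (complRev l) (q ∘ Fin.rev) ↔ EntryCond l b q := by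
  refine ⟨fun h => ?_, EntryCond.complRev⟩
  simpa [Function.comp_def] using h.complRev

lemma idxWeight_mul_entryCoeff_complRev (h : EntryCond l b q) :
    idxWeight k l * entryCoeff (complRev b) (q ∘ Fin.rev) = entryCoeff l q * idxWeight k b := by
  obtain ⟨hle, hsum, h0, hsucc⟩ := h
  set L : ℕ := (l (Fin.last s) : ℕ)
  set S : ℕ := ∑ i, (q i : ℕ)
  have hcoeff : entryCoeff (complRev b) (q ∘ Fin.rev) =
      k ! * k.choose (k - L) * ∏ i : Fin s, (k - (l i.castSucc - q i)).choose (q i) := by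
    simp only [entryCoeff, complRev_apply, Function.comp_apply, Fin.rev_castSucc, Fin.val_rev,
      Fin.rev_last, Fin.sum_univ_comp_rev fun i => (q i : ℕ)]
    rw [Fin.prod_univ_comp_rev fun i => (k + 1 - ((b i.succ : ℕ) + 1)).choose (q i)]
    simp only [h0, hsucc, Nat.add_sub_add_right]
    congr 3
    omega
  have hl : idxWeight k l =
      (∏ i : Fin s, (l i.castSucc : ℕ)! * (k - l i.castSucc)!) * (L ! * (k - L)!) :=
    Fin.prod_univ_castSucc _
  have hb : idxWeight k b = ((L + S)! * (k - (L + S))!) *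
      ∏ i : Fin s, ((l i.castSucc - q i : ℕ)! * (k - (l i.castSucc - q i))!) := by
    rw [idxWeight, Fin.prod_univ_succ, h0]
    simp only [hsucc]
  have hlast :
      L ! * (k - L)! * k.choose (k - L) = k.choose (L + S) * ((L + S)! * (k - (L + S))!) := by
    have hL : L ≤ k := (l (Fin.last s)).is_le
    calc L ! * (k - L)! * k.choose (k - L) = k.choose L * L ! * (k - L)! := by
          rw [Nat.choose_symm hL]; ring
      _ = k ! := Nat.choose_mul_factorial_mul_factorial hL
      _ = _ := by rw [← Nat.choose_mul_factorial_mul_factorial hsum]; ring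
  calc idxWeight k l * entryCoeff (complRev b) (q ∘ Fin.rev)
      = k ! * (L ! * (k - L)! * k.choose (k - L)) * ∏ i : Fin s,
          ((l i.castSucc : ℕ)! * (k - l i.castSucc)! *
            (k - (l i.castSucc - q i)).choose (q i)) := by
        rw [hl, hcoeff,
          prod_mul_distrib (f := fun i : Fin s => (l i.castSucc : ℕ)! * (k - l i.castSucc)!)]
        ring
    _ = k ! * (k.choose (L + S) * ((L + S)! * (k - (L + S))!)) * ∏ i : Fin s,
          ((l i.castSucc : ℕ).choose (q i) *
            ((l i.castSucc - q i : ℕ)! * (k - (l i.castSucc - q i))!)) := by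
        rw [hlast, prod_congr rfl fun i _ =>
          Nat.factorial_mul_factorial_mul_choose_sub (hle i) (l i.castSucc).is_le]
    _ = entryCoeff l q * idxWeight k b := by
        rw [entryCoeff, hb, prod_mul_distrib]
        ring

lemma entryMonomial_complRev {R : Type*} [CommRing R] (a : ℕ → R) (h : EntryCond l b q) :
    entryMonomial (fun i => a (s + 1 - i)) (complRev b) (q ∘ Fin.rev) = entryMonomial a l q := by
  obtain ⟨-, hsum, h0, -⟩ := h
  have hprod :
      ∏ i : Fin s, a (s - i) ^ (q i.rev : ℕ) = ∏ i : Fin s, a (i + 1) ^ (q i : ℕ) :=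
    Fintype.prod_equiv Fin.revPerm _ _ fun i => by
      rw [Fin.revPerm_apply, Fin.val_rev, show s - i = s - (i + 1) + 1 by omega]
  simp only [entryMonomial, complRev_apply, Function.comp_apply, Fin.rev_last, Fin.val_rev,
    Fin.sum_univ_comp_rev fun i => (q i : ℕ), Nat.add_sub_add_right, h0, Nat.sub_zero,
    Nat.sub_self, hprod]
  rw [show k - (k - ((l (Fin.last s) : ℕ) + ∑ i, (q i : ℕ))) - ∑ i, (q i : ℕ) =
    l (Fin.last s) by omega, Nat.sub_add_eq]
  ring

end

lemma idxWeight_mul_entry_complRev {R : Type*} [CommRing R] (a : ℕ → R)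
    (l b : Fin (s + 1) → Fin (k + 1)) :
    (idxWeight k l : R) * entry (fun i => a (s + 1 - i)) (complRev b) (complRev l) =
      entry a l b * idxWeight k b := by
  have hrev : Function.Involutive fun q : Fin s → Fin (k + 1) => q ∘ Fin.rev :=
    fun q => funext fun i => by simp
  rw [entry, entry, mul_sum, sum_mul]
  refine (Fintype.sum_equiv hrev.toPerm _ _ fun q => ?_).symm
  rw [Function.Involutive.coe_toPerm]
  by_cases h : EntryCond l b q
  · rw [if_pos h, if_pos h.complRev, entryMonomial_complRev a h]
    have hcoeff := congrArg (Nat.cast : ℕ → R) (idxWeight_mul_entryCoeff_complRev h)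
    push_cast at hcoeff
    linear_combination -entryMonomial a l q * hcoeff
  · rw [if_neg h, if_neg (mt entryCond_complRev_iff.1 h), zero_mul, mul_zero]

lemma map_ringHom {A B : Type*} [CommRing A] [CommRing B] (f : A →+* B) {t r : ℕ}
    (a : ℕ → A) :
    (PiMat k t r a).map f = PiMat k t r fun n => f (a n) := by
  ext α β
  simp only [map_apply, PiMat, of_apply]
  split_ifs
  · simp only [map_sum, apply_ite f, map_zero, map_mul, map_pow, map_natCast, map_prod, map_one]
  · simp only [map_mul, map_natCast, map_pow]

end PiMat

theorem charpoly_PiMat_complRev_of_charZero {D : Type*} [CommRing D] [IsDomain D] [CharZero D]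
    {k s r : ℕ} (hr : r ≤ k * (s + 1)) (a : ℕ → D) :
    (PiMat k (s + 1) r a).charpoly =
      (PiMat k (s + 1) (k * (s + 1) - r) fun i => a (s + 1 - i)).charpoly := by
  refine charpoly_eq_of_mul_diagonal_eq_diagonal_mul _ _ (GIdx.complRevEquiv hr)
    (fun γ => idxWeight k γ.1) (fun γ => Nat.cast_ne_zero.2 (idxWeight_pos γ.1).ne') ?_
  ext α β
  simp only [mul_diagonal, diagonal_mul, transpose_apply, submatrix_apply, PiMat.succ_apply]
  exact (PiMat.idxWeight_mul_entry_complRev a α.1 β.1).symm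

theorem charpoly_PiMat_complRev {R : Type*} [CommRing R] {k s r : ℕ} (hr : r ≤ k * (s + 1))
    (a : ℕ → R) :
    (PiMat k (s + 1) r a).charpoly =
      (PiMat k (s + 1) (k * (s + 1) - r) fun i => a (s + 1 - i)).charpoly := by
  let f : MvPolynomial ℕ ℤ →+* R := MvPolynomial.eval₂Hom (Int.castRingHom R) a
  have h := congrArg (Polynomial.map f)
    (charpoly_PiMat_complRev_of_charZero hr (MvPolynomial.X : ℕ → MvPolynomial ℕ ℤ))
  rw [← charpoly_map, ← charpoly_map, PiMat.map_ringHom, PiMat.map_ringHom] at h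
  simpa [f] using h

theorem stmt14_general {R : Type*} [CommRing R] (k t r : ℕ) (ht : 1 ≤ t)
    (hr : r ≤ k * t) (a : ℕ → R) :
    ((Polynomial.X : Polynomial R) • (1 : Matrix (GIdx k r t) (GIdx k r t) (Polynomial R)) -
        (PiMat k t r a).map Polynomial.C).det =
      ((Polynomial.X : Polynomial R) • (1 : Matrix (GIdx k (k * t - r) t) (GIdx k (k * t - r) t) (Polynomial R)) -
        (PiMat k t (k * t - r) (fun i => a (t - i))).map Polynomial.C).det := by
  obtain ⟨s, rfl⟩ := Nat.exists_eq_add_of_le' ht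
  rw [det_X_smul_one_sub_map_C, det_X_smul_one_sub_map_C]
  exact charpoly_PiMat_complRev hr a

theorem stmt14 {R : Type*} [CommRing R] (k t r : ℕ) (hk : 1 ≤ k) (ht : 1 ≤ t)
    (hr : r ≤ k * t) (a : ℕ → R) :
    ((Polynomial.X : Polynomial R) • (1 : Matrix (GIdx k r t) (GIdx k r t) (Polynomial R)) -
        (PiMat k t r a).map Polynomial.C).det =
      ((Polynomial.X : Polynomial R) • (1 : Matrix (GIdx k (k * t - r) t) (GIdx k (k * t - r) t) (Polynomial R)) -
        (PiMat k t (k * t - r) (fun i => a (t - i))).map Polynomial.C).det :=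
  stmt14_general k t r ht hr a
end

section
/- Let k ≥ 1 and t ≥ 1, let 1 ≤ r ≤ kt, and let a_0, a_1, …, a_t be elements of a commutative ring with unity. Then the permanent of the square matrix Π_{r,t}^{[k]}(a_0, a_1, …, a_t) satisfies per(Π_{r,t}^{[k]}(a_0, a_1, …, a_t)) = Π_{i=0}^{min(k,r)} ( k!·C(k,i)·a_0^{k−i}·a_t^{i} )^{|G_{r−i,t−1}^{[k]}|}. -/
open scoped BigOperators Classical

/-- The permanent of a square matrix: `per(B) = ∑_{σ ∈ Sym} ∏_i B i (σ i)`. -/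
noncomputable def sqPer {R : Type*} [CommRing R] {ι : Type*} [Fintype ι] [DecidableEq ι]
    (M : Matrix ι ι R) : R :=
  ∑ σ : Equiv.Perm ι, ∏ i, M i (σ i)


namespace Stmt15Aux

def rotF (s : ℕ) : Fin (s + 1) ≃ Fin (s + 1) := (finRotate (s + 1)).symm

lemma rotF_zero (s : ℕ) : rotF s 0 = Fin.last s := by
  rw [rotF, Equiv.symm_apply_eq, finRotate_succ_apply, Fin.last_add_one]

lemma rotF_pos (s : ℕ) (j : Fin (s + 1)) (hj : 0 < j.val) :
    rotF s j = ⟨j.val - 1, by omega⟩ := by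
  rw [rotF, Equiv.symm_apply_eq, finRotate_succ_apply]
  have hs : 1 ≤ s := by
    rcases Nat.lt_or_ge j.val (s+1) with h | h
    · omega
    · exact absurd j.isLt (by omega)
  ext
  symm
  rw [Fin.add_def]
  show (j.val - 1 + (1 : Fin (s+1)).val) % (s + 1) = j.val
  simp only [Fin.val_one']
  have h1 : 1 % (s + 1) = 1 := Nat.mod_eq_of_lt (by omega)
  rw [h1, Nat.mod_eq_of_lt (by omega)]
  omega

def rotG (k r s : ℕ) : GIdx k r (s + 1) ≃ GIdx k r (s + 1) where
  toFun α := ⟨fun i => α.1 (rotF s i), by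
    exact (Equiv.sum_comp (rotF s) fun j => (α.1 j : ℕ)).trans α.2⟩
  invFun α := ⟨fun i => α.1 ((rotF s).symm i), by
    exact (Equiv.sum_comp (rotF s).symm fun j => (α.1 j : ℕ)).trans α.2⟩
  left_inv α := by apply Subtype.ext; funext i; simp
  right_inv α := by apply Subtype.ext; funext i; simp

lemma rotG_zero (k r s : ℕ) (α : GIdx k r (s + 1)) :
    ((rotG k r s α).1 0 : ℕ) = α.1 (Fin.last s) := by
  show (α.1 (rotF s 0) : ℕ) = _
  rw [rotF_zero]

lemma rotG_pos (k r s : ℕ) (α : GIdx k r (s + 1)) (j : Fin (s + 1)) (hj : 0 < j.val) :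
    ((rotG k r s α).1 j : ℕ) = α.1 ⟨j.val - 1, by omega⟩ := by
  show (α.1 (rotF s j) : ℕ) = _
  rw [rotF_pos s j hj]

end Stmt15Aux

namespace Stmt15Aux
variable {R : Type*} [CommRing R]

lemma mk_last (s : ℕ) (h : s + 1 - 1 < s + 1) : (⟨s + 1 - 1, h⟩ : Fin (s + 1)) = Fin.last s := by
  ext; simp

lemma mk_zero' (s : ℕ) (h : 0 < s + 1) : (⟨0, h⟩ : Fin (s + 1)) = 0 := rfl

lemma piMat_zero_of_lt (k r s : ℕ) (a : ℕ → R) (α β : GIdx k r (s + 1))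
    (h : (β.1 0 : ℕ) < (α.1 (Fin.last s) : ℕ)) :
    PiMat k (s + 1) r a α β = 0 := by
  have hlt : 0 < s + 1 := Nat.succ_pos s
  simp only [PiMat, Matrix.of_apply, dif_pos hlt]
  rw [mk_last s, mk_zero' s]
  apply Finset.sum_eq_zero
  intro p _
  rw [if_neg]
  rintro ⟨-, -, -, h4, -⟩
  omega

end Stmt15Aux

namespace Stmt15Aux
variable {R : Type*} [CommRing R]

lemma piMat_zero_of_ne (k r s : ℕ) (a : ℕ → R) (α β : GIdx k r (s + 1))
    (h0 : (β.1 0 : ℕ) = (α.1 (Fin.last s) : ℕ)) (hne : β ≠ rotG k r s α) :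
    PiMat k (s + 1) r a α β = 0 := by
  have hlt : 0 < s + 1 := Nat.succ_pos s
  simp only [PiMat, Matrix.of_apply, dif_pos hlt]
  rw [mk_last s, mk_zero' s]
  apply Finset.sum_eq_zero
  intro p _
  rw [if_neg]
  rintro ⟨h1, h2, h3, h4, h5⟩
  have hsum : ∑ i, (p i : ℕ) = 0 := by omega
  have hp : ∀ i, (p i : ℕ) = 0 := by
    intro i
    exact (Finset.sum_eq_zero_iff.mp hsum) i (Finset.mem_univ i)
  apply hne
  apply Subtype.ext
  funext i
  apply Fin.ext
  by_cases hi : 0 < i.val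
  · have h5i := h5 i hi
    rw [hp ⟨i.val - 1, by omega⟩] at h5i
    rw [rotG_pos k r s α i hi]
    omega
  · have hi0 : i = 0 := by
      apply Fin.ext
      simp only [Fin.val_zero]
      omega
    subst hi0
    rw [rotG_zero k r s α]
    exact h0

lemma piMat_diag (k r s : ℕ) (a : ℕ → R) (α : GIdx k r (s + 1)) :
    PiMat k (s + 1) r a α (rotG k r s α) =
      (Nat.factorial k : R) * (Nat.choose k (α.1 (Fin.last s) : ℕ) : R) *
        a 0 ^ (k - (α.1 (Fin.last s) : ℕ)) * a (s + 1) ^ (α.1 (Fin.last s) : ℕ) := by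
  have hlt : 0 < s + 1 := Nat.succ_pos s
  simp only [PiMat, Matrix.of_apply, dif_pos hlt]
  rw [mk_last s, mk_zero' s]
  have hz : ∑ i : Fin (s + 1), ((0 : Fin (k + 1)) : ℕ) = 0 := by simp
  rw [Finset.sum_eq_single_of_mem (fun _ => (0 : Fin (k + 1))) (Finset.mem_univ _)]
  · rw [if_pos]
    · rw [hz]
      have hc1 : (∏ i : Fin (s + 1), if i.val + 1 < s + 1 then
          ((Nat.choose (α.1 i : ℕ) ((0 : Fin (k+1)) : ℕ)) : R) else 1) = 1 := by
        apply Finset.prod_eq_one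
        intro i _
        split <;> simp
      have hc2 : (∏ i : Fin (s + 1), if i.val + 1 < s + 1 then
          a (i.val + 1) ^ ((0 : Fin (k+1)) : ℕ) else 1) = 1 := by
        apply Finset.prod_eq_one
        intro i _
        split <;> simp
      rw [hc1, hc2, Nat.sub_zero, Nat.add_zero]
      ring
    · refine ⟨fun i _ => Nat.zero_le _, fun i _ => rfl,
        by simpa using (α.1 (Fin.last s)).is_le, by rw [rotG_zero]; simp, fun j hj => ?_⟩
      rw [rotG_pos k r s α j hj]
      simp
  · intro p _ hne
    rw [if_neg]
    rintro ⟨h1, h2, h3, h4, h5⟩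
    rw [rotG_zero] at h4
    have hsum : ∑ i, (p i : ℕ) = 0 := by omega
    apply hne
    funext i
    apply Fin.ext
    exact (Finset.sum_eq_zero_iff.mp hsum) i (Finset.mem_univ i)

end Stmt15Aux

namespace Stmt15Aux
variable {R : Type*} [CommRing R]

lemma exists_zero_entry (k r s : ℕ) (a : ℕ → R) (σ : Equiv.Perm (GIdx k r (s + 1)))
    (hσ : σ ≠ rotG k r s) : ∃ α, PiMat k (s + 1) r a α (σ α) = 0 := by
  by_contra h
  push_neg at h
  have hge : ∀ α : GIdx k r (s + 1), (α.1 (Fin.last s) : ℕ) ≤ ((σ α).1 0 : ℕ) := by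
    intro α
    by_contra hlt
    push_neg at hlt
    exact h α (piMat_zero_of_lt k r s a α (σ α) hlt)
  have hsum1 : ∑ α : GIdx k r (s + 1), ((σ α).1 0 : ℕ) = ∑ β : GIdx k r (s + 1), (β.1 0 : ℕ) :=
    Equiv.sum_comp σ (fun β : GIdx k r (s + 1) => (β.1 0 : ℕ))
  have hsum2 : ∑ β : GIdx k r (s + 1), (β.1 0 : ℕ) =
      ∑ α : GIdx k r (s + 1), (α.1 (Fin.last s) : ℕ) := by
    rw [← Equiv.sum_comp (rotG k r s) (fun β : GIdx k r (s + 1) => (β.1 0 : ℕ))]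
    exact Finset.sum_congr rfl fun α _ => rotG_zero k r s α
  have heq : ∀ α : GIdx k r (s + 1), (α.1 (Fin.last s) : ℕ) = ((σ α).1 0 : ℕ) := by
    have := (Finset.sum_eq_sum_iff_of_le (fun α _ => hge α)).mp (by rw [hsum1, hsum2])
    exact fun α => this α (Finset.mem_univ α)
  apply hσ
  apply Equiv.ext
  intro α
  by_contra hne
  exact h α (piMat_zero_of_ne k r s a α (σ α) (heq α).symm hne)

def fiberEquiv (k r s i : ℕ) (hik : i ≤ k) (hir : i ≤ r) :
    {α : GIdx k r (s + 1) // (α.1 (Fin.last s) : ℕ) = i} ≃ GIdx k (r - i) s where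
  toFun α := ⟨fun j => α.1.1 j.castSucc, by
    have h2 := α.1.2
    rw [Fin.sum_univ_castSucc, α.2] at h2
    show ∑ j : Fin s, (α.1.1 j.castSucc : ℕ) = r - i
    omega⟩
  invFun β := ⟨⟨Fin.snoc (fun j => β.1 j) ⟨i, by omega⟩, by
      rw [Fin.sum_univ_castSucc]
      simp only [Fin.snoc_castSucc, Fin.snoc_last]
      rw [β.2]
      omega⟩, by simp [Fin.snoc_last]⟩
  left_inv α := by
    apply Subtype.ext
    apply Subtype.ext
    funext j
    induction j using Fin.lastCases with
    | last =>
      simp only [Fin.snoc_last]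
      apply Fin.ext
      simpa using α.2.symm
    | cast j => simp [Fin.snoc_castSucc]
  right_inv β := by
    apply Subtype.ext
    funext j
    simp [Fin.snoc_castSucc]

lemma card_fiber (k r s i : ℕ) (hik : i ≤ k) (hir : i ≤ r) :
    (Finset.univ.filter (fun α : GIdx k r (s + 1) => (α.1 (Fin.last s) : ℕ) = i)).card =
      Fintype.card (GIdx k (r - i) s) := by
  rw [← Fintype.card_subtype]
  exact Fintype.card_congr (fiberEquiv k r s i hik hir)

end Stmt15Aux

open Stmt15Aux

theorem stmt15 {R : Type*} [CommRing R] (k t r : ℕ) (hk : 1 ≤ k) (ht : 1 ≤ t)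
    (hr1 : 1 ≤ r) (hr2 : r ≤ k * t) (a : ℕ → R) :
    sqPer (PiMat k t r a) =
      ∏ i ∈ Finset.range (min k r + 1),
        ((Nat.factorial k : R) * (Nat.choose k i : R) * a 0 ^ (k - i) * a t ^ i) ^
          Fintype.card (GIdx k (r - i) (t - 1)) := by
  obtain ⟨s, rfl⟩ : ∃ s, t = s + 1 := ⟨t - 1, by omega⟩
  simp only [Nat.add_sub_cancel]
  have h1 : sqPer (PiMat k (s + 1) r a) =
      ∏ α : GIdx k r (s + 1), PiMat k (s + 1) r a α (rotG k r s α) := by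
    rw [sqPer]
    apply Finset.sum_eq_single_of_mem _ (Finset.mem_univ _)
    intro σ _ hne
    obtain ⟨α, hα⟩ := exists_zero_entry k r s a σ hne
    exact Finset.prod_eq_zero (Finset.mem_univ α) hα
  rw [h1]
  have h2 : ∀ α : GIdx k r (s + 1), PiMat k (s + 1) r a α (rotG k r s α) =
      (fun i : ℕ => (Nat.factorial k : R) * (Nat.choose k i : R) * a 0 ^ (k - i) *
        a (s + 1) ^ i) ((α.1 (Fin.last s) : ℕ)) :=
    fun α => piMat_diag k r s a α
  rw [Finset.prod_congr rfl fun α _ => h2 α]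
  have hmaps : ∀ α ∈ (Finset.univ : Finset (GIdx k r (s + 1))),
      (α.1 (Fin.last s) : ℕ) ∈ Finset.range (min k r + 1) := by
    intro α _
    have hle : (α.1 (Fin.last s) : ℕ) ≤ ∑ i, (α.1 i : ℕ) :=
      Finset.single_le_sum (f := fun i : Fin (s + 1) => (α.1 i : ℕ))
        (fun i _ => Nat.zero_le _) (Finset.mem_univ (Fin.last s))
    rw [α.2] at hle
    have := (α.1 (Fin.last s)).is_le
    simp only [Finset.mem_range]
    omega
  rw [← Finset.prod_fiberwise_of_maps_to hmaps
    (fun α : GIdx k r (s + 1) => (fun i : ℕ => (Nat.factorial k : R) * (Nat.choose k i : R) *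
      a 0 ^ (k - i) * a (s + 1) ^ i) ((α.1 (Fin.last s) : ℕ)))]
  apply Finset.prod_congr rfl
  intro j hj
  simp only [Finset.mem_range] at hj
  rw [Finset.prod_congr rfl (fun α hα => by rw [(Finset.mem_filter.mp hα).2]),
    Finset.prod_const, card_fiber k r s j (by omega) (by omega)]
end
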